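/- arXiv:math/0607690 — 4 statements merged into one kernel-verified Lean document; each statement's English description precedes it below -/
import Mathlib

section
/- For all integers k and l, the operators on the fermionic Fock space 𝓕 satisfy the Clifford anti-commutation relation ψ(k)∘ψ*(l) + ψ*(l)∘ψ(k) = δ_{k,l}·id_𝓕, i.e. this sum of compositions is the identity map when k = l and the zero map when k ≠ l. -/
open scoped Classical

/-- A semi-infinite monomial: a strictly decreasing sequence `i : ℕ → ℤ`
(written `i₀ > i₁ > i₂ > ⋯`) such that `i n = m - n` for all sufficiently
large `n`, for some integer `m` (the charge). -/
structure SIM : Type where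
  seq : ℕ → ℤ
  strictAnti : StrictAnti seq
  charge_exists : ∃ m : ℤ, ∃ N : ℕ, ∀ n ≥ N, seq n = m - n

namespace SIM

/-- `v` has charge `m` if `v n = m - n` for all sufficiently large `n`. -/
def HasCharge (v : SIM) (m : ℤ) : Prop :=
  ∃ N : ℕ, ∀ n ≥ N, v.seq n = m - n

/-- The charge of a semi-infinite monomial. -/
noncomputable def charge (v : SIM) : ℤ := v.charge_exists.choose

theorem exists_seq_lt (v : SIM) (k : ℤ) : ∃ n, v.seq n < k := by
  obtain ⟨m, N, hN⟩ := v.charge_exists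
  refine ⟨max N (m - k + 1).toNat, ?_⟩
  rw [hN _ (le_max_left _ _)]
  have h1 : (m - k + 1).toNat ≤ max N (m - k + 1).toNat := le_max_right _ _
  omega

/-- The position at which `k` is inserted into `v`: the number of entries of `v`
that are greater than `k` (assuming `k` does not occur in `v`). -/
noncomputable def insIdx (v : SIM) (k : ℤ) : ℕ := sInf {n : ℕ | v.seq n < k}

/-- The monomial obtained from `v` by inserting the entry `k`
(meaningful when `k` does not occur among the entries of `v`; in the unused
case where `k` does occur we simply return `v`). -/
noncomputable def insert (v : SIM) (k : ℤ) : SIM :=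
  if h : k ∈ Set.range v.seq then v
  else
    { seq := fun n =>
        if n < v.insIdx k then v.seq n else if n = v.insIdx k then k else v.seq (n - 1)
      strictAnti := by
        have hs : v.seq (v.insIdx k) < k := Nat.sInf_mem (v.exists_seq_lt k)
        have hgt : ∀ n, n < v.insIdx k → k < v.seq n := by
          intro n hn
          have h1 : ¬ v.seq n < k := Nat.notMem_of_lt_sInf hn
          have h2 : v.seq n ≠ k := fun hh => h ⟨n, hh⟩
          omega
        apply strictAnti_nat_of_succ_lt
        intro n

        rcases lt_trichotomy (n + 1) (v.insIdx k) with h1 | h1 | h1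
        · rw [if_pos h1, if_pos (by omega)]
          exact v.strictAnti (Nat.lt_succ_self n)
        · rw [if_neg (by omega), if_pos h1, if_pos (by omega)]
          exact hgt n (by omega)
        · rw [if_neg (by omega), if_neg (by omega)]
          rcases eq_or_lt_of_le (Nat.le_of_lt_succ h1) with h2 | h2
          · rw [if_neg (by omega), if_pos h2.symm]
            simpa [← h2] using hs
          · rw [if_neg (by omega), if_neg (by omega)]
            exact v.strictAnti (by omega)
      charge_exists := by
        obtain ⟨m, N, hN⟩ := v.charge_exists
        refine ⟨m + 1, max N (v.insIdx k) + 1, fun n hn => ?_⟩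

        beta_reduce
        rw [if_neg (by omega), if_neg (by omega), hN (n - 1) (by omega)]
        omega }

/-- The position of the entry `k` in `v` (assuming `k` occurs in `v`). -/
noncomputable def delIdx (v : SIM) (k : ℤ) : ℕ := sInf {n : ℕ | v.seq n ≤ k}

/-- The monomial obtained from `v` by deleting the entry `k`
(meaningful when `k` occurs among the entries of `v`). -/
noncomputable def delete (v : SIM) (k : ℤ) : SIM where
  seq n := if n < v.delIdx k then v.seq n else v.seq (n + 1)
  strictAnti := by
    apply strictAnti_nat_of_succ_lt
    intro n

    split_ifs <;> exact v.strictAnti (by omega)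
  charge_exists := by
    obtain ⟨m, N, hN⟩ := v.charge_exists
    refine ⟨m - 1, max N (v.delIdx k), fun n hn => ?_⟩

    beta_reduce
    rw [if_neg (by omega), hN (n + 1) (by omega)]
    omega

end SIM

/-- The fermionic Fock space: the free ℂ-vector space on the set of all
semi-infinite monomials (of all charges). -/
abbrev Fock : Type := SIM →₀ ℂ

/-- The wedging operator `ψ(k)`: it sends a basis monomial `i₀ > i₁ > ⋯` to `0`
if `k = i_s` for some `s`, and otherwise to `(−1)^s` times the basis monomial
obtained by inserting `k`, where `s` is the number of entries greater
than `k`. -/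
noncomputable def psi (k : ℤ) : Fock →ₗ[ℂ] Fock :=
  Finsupp.lsum ℂ fun v =>
    if k ∈ Set.range v.seq then 0
    else ((-1 : ℂ) ^ v.insIdx k) • Finsupp.lsingle (v.insert k)

/-- The contracting operator `ψ*(k)`: it sends a basis monomial `i₀ > i₁ > ⋯`
to `(−1)^s` times the basis monomial obtained by deleting `i_s` if `k = i_s`,
and to `0` if `k` does not occur among the entries. -/
noncomputable def psiStar (k : ℤ) : Fock →ₗ[ℂ] Fock :=
  Finsupp.lsum ℂ fun v =>
    if k ∈ Set.range v.seq then ((-1 : ℂ) ^ v.delIdx k) • Finsupp.lsingle (v.delete k)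
    else 0

/-! On a basis monomial `v` everything is governed by its set of entries `R`: a strictly
decreasing sequence is determined by its range, `insert`/`delete` act on `R` as set insertion
and removal, and the sign exponent `v.insIdx x` is the number of entries `≥ x`. For `k = l`
exactly one of the two composites is nonzero, and it removes and reinserts `k` (or inserts and
removes it) with the same exponent twice. For `k ≠ l` only the case `k ∉ R`, `l ∈ R` is
nonzero; then both composites reach the same monomial, and their exponents differ by one:
inserting `k` first raises the position of `l` exactly when `k > l`, while deleting `l` first
lowers the position of `k` exactly when `l > k`. -/

namespace SIM

variable {v : SIM} {k l : ℤ}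

theorem ext_of_range {v w : SIM} (h : Set.range v.seq = Set.range w.seq) : v = w := by
  have hseq : v.seq = w.seq :=
    (StrictMono.range_inj (γ := ℤᵒᵈ) (f := v.seq) (g := w.seq) v.strictAnti w.strictAnti).1 h
  cases v; cases w; cases hseq; rfl

theorem seq_lt_iff (v : SIM) (k : ℤ) (n : ℕ) : v.seq n < k ↔ v.insIdx k ≤ n :=
  ⟨fun h => Nat.sInf_le h, fun h =>
    (v.strictAnti.antitone h).trans_lt (Nat.sInf_mem (v.exists_seq_lt k))⟩

theorem delIdx_eq_insIdx_add_one (v : SIM) (k : ℤ) : v.delIdx k = v.insIdx (k + 1) := by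
  simp only [delIdx, insIdx, Int.lt_add_one_iff]

theorem insIdx_add_one_of_notMem (hk : k ∉ Set.range v.seq) :
    v.insIdx (k + 1) = v.insIdx k := by
  have hne : ∀ n, v.seq n ≠ k := fun n h => hk ⟨n, h⟩
  simp only [insIdx, Int.lt_add_one_iff, le_iff_lt_or_eq, hne, or_false]

theorem delIdx_seq (v : SIM) (m : ℕ) : v.delIdx (v.seq m) = m := by
  have hS : {n | v.seq n ≤ v.seq m} = Set.Ici m := Set.ext fun n => v.strictAnti.le_iff_ge
  rw [delIdx, hS, csInf_Ici]

theorem insert_seq (hk : k ∉ Set.range v.seq) (n : ℕ) :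
    (v.insert k).seq n =
      if n < v.insIdx k then v.seq n else if n = v.insIdx k then k else v.seq (n - 1) := by
  rw [SIM.insert, dif_neg hk]

theorem delete_seq (v : SIM) (k : ℤ) (n : ℕ) :
    (v.delete k).seq n = if n < v.delIdx k then v.seq n else v.seq (n + 1) := rfl

theorem range_insert (hk : k ∉ Set.range v.seq) :
    Set.range (v.insert k).seq = Insert.insert k (Set.range v.seq) := by
  apply Set.Subset.antisymm
  · rintro _ ⟨n, rfl⟩
    rw [insert_seq hk]
    split_ifs
    · exact Or.inr ⟨n, rfl⟩
    · exact Or.inl rfl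
    · exact Or.inr ⟨n - 1, rfl⟩
  · rintro y (hy | ⟨n, rfl⟩)
    · exact ⟨v.insIdx k, by rw [insert_seq hk, if_neg (lt_irrefl _), if_pos rfl, hy]⟩
    · by_cases h : n < v.insIdx k
      · exact ⟨n, by rw [insert_seq hk, if_pos h]⟩
      · exact ⟨n + 1, by rw [insert_seq hk, if_neg (by omega), if_neg (by omega),
          Nat.add_sub_cancel]⟩

theorem range_delete (hk : k ∈ Set.range v.seq) :
    Set.range (v.delete k).seq = Set.range v.seq \ {k} := by
  obtain ⟨m, rfl⟩ := hk
  apply Set.Subset.antisymm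
  · rintro _ ⟨n, rfl⟩
    rw [delete_seq, delIdx_seq]
    split_ifs
    · exact ⟨⟨n, rfl⟩, fun h => by have := v.strictAnti.injective h; omega⟩
    · exact ⟨⟨n + 1, rfl⟩, fun h => by have := v.strictAnti.injective h; omega⟩
  · rintro _ ⟨⟨n, rfl⟩, hne⟩
    have hnm : n ≠ m := fun h => hne (h ▸ rfl)
    by_cases h : n < m
    · exact ⟨n, by rw [delete_seq, delIdx_seq, if_pos h]⟩
    · exact ⟨n - 1, by
        rw [delete_seq, delIdx_seq, if_neg (by omega), Nat.sub_add_cancel (by omega)]⟩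

theorem notMem_range_delete_self (hk : k ∈ Set.range v.seq) :
    k ∉ Set.range (v.delete k).seq := by
  simp [range_delete hk]

theorem delete_insert_self (hk : k ∉ Set.range v.seq) : (v.insert k).delete k = v :=
  ext_of_range <| by
    rw [range_delete (by simp [range_insert hk]), range_insert hk,
      Set.insert_sdiff_self_of_notMem hk]

theorem insert_delete_self (hk : k ∈ Set.range v.seq) : (v.delete k).insert k = v :=
  ext_of_range <| by
    rw [range_insert (notMem_range_delete_self hk), range_delete hk,
      Set.insert_sdiff_self_of_mem hk]

theorem delete_insert_comm (hk : k ∉ Set.range v.seq) (hl : l ∈ Set.range v.seq) :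
    (v.insert k).delete l = (v.delete l).insert k :=
  ext_of_range <| by
    rw [range_delete (by simp [range_insert hk, hl]), range_insert hk,
      range_insert (by simp [range_delete hl, hk]), range_delete hl,
      Set.insert_sdiff_of_notMem _ fun h : k ∈ ({l} : Set ℤ) => hk (h ▸ hl)]

theorem range_inter_Ici (v : SIM) (k : ℤ) :
    Set.range v.seq ∩ Set.Ici k = v.seq '' Set.Iio (v.insIdx k) := by
  ext y
  simp only [Set.mem_inter_iff, Set.mem_range, Set.mem_Ici, Set.mem_image, Set.mem_Iio]
  constructor
  · rintro ⟨⟨n, rfl⟩, hn⟩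
    exact ⟨n, not_le.1 fun h => ((v.seq_lt_iff k n).2 h).not_ge hn, rfl⟩
  · rintro ⟨n, hn, rfl⟩
    exact ⟨⟨n, rfl⟩, not_lt.1 fun h => ((v.seq_lt_iff k n).1 h).not_gt hn⟩

theorem finite_range_inter_Ici (v : SIM) (k : ℤ) : (Set.range v.seq ∩ Set.Ici k).Finite := by
  rw [range_inter_Ici]
  exact (Set.finite_Iio _).image _

theorem insIdx_eq_ncard (v : SIM) (k : ℤ) :
    v.insIdx k = (Set.range v.seq ∩ Set.Ici k).ncard := by
  rw [range_inter_Ici, Set.ncard_image_of_injective _ v.strictAnti.injective,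
    ← Finset.coe_range, Set.ncard_coe_finset, Finset.card_range]

theorem insIdx_insert (hk : k ∉ Set.range v.seq) (x : ℤ) :
    (v.insert k).insIdx x = v.insIdx x + if x ≤ k then 1 else 0 := by
  rw [insIdx_eq_ncard, insIdx_eq_ncard, range_insert hk]
  split_ifs with hx
  · rw [Set.insert_inter_of_mem (Set.mem_Ici.2 hx),
      Set.ncard_insert_of_notMem (fun h => hk h.1) (v.finite_range_inter_Ici x)]
  · rw [Set.insert_inter_of_notMem (mt Set.mem_Ici.1 hx), add_zero]

theorem insIdx_delete_add (hl : l ∈ Set.range v.seq) (x : ℤ) :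
    (v.delete l).insIdx x + (if x ≤ l then 1 else 0) = v.insIdx x := by
  rw [insIdx_eq_ncard, insIdx_eq_ncard, range_delete hl, Set.sdiff_inter_right_comm]
  split_ifs with hx
  · exact Set.ncard_sdiff_singleton_add_one ⟨hl, hx⟩ (v.finite_range_inter_Ici x)
  · rw [Set.sdiff_singleton_eq_self fun h => hx h.2, add_zero]

theorem delIdx_insert_self (hk : k ∉ Set.range v.seq) :
    (v.insert k).delIdx k = v.insIdx k := by
  rw [delIdx_eq_insIdx_add_one, insIdx_insert hk, if_neg (by omega), add_zero,
    insIdx_add_one_of_notMem hk]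

theorem insIdx_delete_self (hk : k ∈ Set.range v.seq) :
    (v.delete k).insIdx k = v.delIdx k := by
  have h := insIdx_delete_add hk (k + 1)
  rw [if_neg (by omega), add_zero] at h
  rw [← insIdx_add_one_of_notMem (notMem_range_delete_self hk), h, delIdx_eq_insIdx_add_one]

theorem insIdx_add_delIdx_insert (hk : k ∉ Set.range v.seq) (hl : l ∈ Set.range v.seq) :
    v.insIdx k + (v.insert k).delIdx l = v.delIdx l + (v.delete l).insIdx k + 1 := by
  have h_ins := insIdx_insert hk (l + 1)
  have h_del := insIdx_delete_add hl k
  rw [delIdx_eq_insIdx_add_one, delIdx_eq_insIdx_add_one, h_ins]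
  split_ifs at h_del ⊢ <;> omega

end SIM

section Operators

open Finsupp

variable {v : SIM} {k l : ℤ}

theorem psi_single_of_mem (h : k ∈ Set.range v.seq) (b : ℂ) : psi k (single v b) = 0 := by
  rw [psi, lsum_single, if_pos h, LinearMap.zero_apply]

theorem psi_single_of_notMem (h : k ∉ Set.range v.seq) (b : ℂ) :
    psi k (single v b) = ((-1 : ℂ) ^ v.insIdx k) • single (v.insert k) b := by
  rw [psi, lsum_single, if_neg h, LinearMap.smul_apply, lsingle_apply]

theorem psiStar_single_of_mem (h : k ∈ Set.range v.seq) (b : ℂ) :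
    psiStar k (single v b) = ((-1 : ℂ) ^ v.delIdx k) • single (v.delete k) b := by
  rw [psiStar, lsum_single, if_pos h, LinearMap.smul_apply, lsingle_apply]

theorem psiStar_single_of_notMem (h : k ∉ Set.range v.seq) (b : ℂ) :
    psiStar k (single v b) = 0 := by
  rw [psiStar, lsum_single, if_neg h, LinearMap.zero_apply]

theorem psi_psiStar_single_self (hk : k ∈ Set.range v.seq) (b : ℂ) :
    psi k (psiStar k (single v b)) = single v b := by
  rw [psiStar_single_of_mem hk, map_smul, psi_single_of_notMem (SIM.notMem_range_delete_self hk),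
    SIM.insIdx_delete_self hk, SIM.insert_delete_self hk, smul_smul, ← pow_add,
    Even.neg_one_pow ⟨_, rfl⟩, one_smul]

theorem psiStar_psi_single_self (hk : k ∉ Set.range v.seq) (b : ℂ) :
    psiStar k (psi k (single v b)) = single v b := by
  rw [psi_single_of_notMem hk, map_smul,
    psiStar_single_of_mem (by simp [SIM.range_insert hk]), SIM.delIdx_insert_self hk,
    SIM.delete_insert_self hk, smul_smul, ← pow_add, Even.neg_one_pow ⟨_, rfl⟩, one_smul]

theorem psi_psiStar_single_add_psiStar_psi_single (hk : k ∉ Set.range v.seq)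
    (hl : l ∈ Set.range v.seq) (b : ℂ) :
    psi k (psiStar l (single v b)) + psiStar l (psi k (single v b)) = 0 := by
  rw [psiStar_single_of_mem hl, map_smul,
    psi_single_of_notMem (by simp [SIM.range_delete hl, hk]), psi_single_of_notMem hk,
    map_smul, psiStar_single_of_mem (by simp [SIM.range_insert hk, hl]),
    SIM.delete_insert_comm hk hl, smul_smul, smul_smul, ← pow_add, ← pow_add,
    SIM.insIdx_add_delIdx_insert hk hl, ← add_smul, pow_succ, mul_neg_one,
    add_neg_cancel, zero_smul]

end Operators

/-- For all integers `k` and `l`, the operators on the fermionic Fock space `𝓕`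
satisfy the Clifford anti-commutation relation
`ψ(k)∘ψ*(l) + ψ*(l)∘ψ(k) = δ_{k,l}·id`. -/
theorem psi_psiStar_anticomm (k l : ℤ) :
    psi k ∘ₗ psiStar l + psiStar l ∘ₗ psi k =
      if k = l then (LinearMap.id : Fock →ₗ[ℂ] Fock) else 0 := by
  refine Finsupp.lhom_ext fun v b => ?_
  rw [LinearMap.add_apply, LinearMap.comp_apply, LinearMap.comp_apply]
  by_cases hkl : k = l
  · subst hkl
    rw [if_pos rfl, LinearMap.id_apply]
    by_cases hk : k ∈ Set.range v.seq
    · rw [psi_single_of_mem hk, map_zero, add_zero, psi_psiStar_single_self hk]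
    · rw [psiStar_single_of_notMem hk, map_zero, zero_add, psiStar_psi_single_self hk]
  rw [if_neg hkl, LinearMap.zero_apply]
  by_cases hk : k ∈ Set.range v.seq <;> by_cases hl : l ∈ Set.range v.seq
  · rw [psi_single_of_mem hk, psiStar_single_of_mem hl, map_zero, map_smul,
      psi_single_of_mem (by simp [SIM.range_delete hl, hk, hkl]), smul_zero, add_zero]
  · rw [psi_single_of_mem hk, psiStar_single_of_notMem hl, map_zero, map_zero, add_zero]
  · exact psi_psiStar_single_add_psiStar_psi_single hk hl b
  · rw [psiStar_single_of_notMem hl, psi_single_of_notMem hk, map_zero, map_smul,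
      psiStar_single_of_notMem (by simp [SIM.range_insert hk, hl, Ne.symm hkl]), smul_zero,
      add_zero]
end

section
/- Let n be a nonzero integer and let v ∈ 𝓕 be a basis vector given by a semi-infinite monomial. Then ψ(j+n)∘ψ*(j)(v) = 0 for all but finitely many integers j; consequently the formula p(n)(v) = Σ_{j∈ℤ} ψ(j+n)ψ*(j)(v) defines a ℂ-linear operator p(n) : 𝓕 → 𝓕. -/
open scoped Classical

/-! `ψ*(j) v` vanishes unless `j` is an entry of `v`, and deleting `j` keeps every other entry;
as `j + n ≠ j`, `ψ(j + n) ψ*(j) v` therefore vanishes unless moreover `j + n` is not an entry of `v`.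
The entries of `v` are at most `v₀`, while every integer below some bound `L` (fixed by the charge)
is an entry, so only the finitely many `j ∈ (L - n, v₀]` contribute. The operator is the linear
extension of its values on the basis of `𝓕`. -/

lemma psiStar_single (j : ℤ) (v : SIM) :
    psiStar j (Finsupp.single v 1) =
      if j ∈ Set.range v.seq then
        ((-1 : ℂ) ^ v.delIdx j) • Finsupp.single (v.delete j) 1 else 0 := by
  rw [psiStar, Finsupp.lsum_single]
  split_ifs <;> simp

lemma psi_single (k : ℤ) (v : SIM) :
    psi k (Finsupp.single v 1) =
      if k ∈ Set.range v.seq then 0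
      else ((-1 : ℂ) ^ v.insIdx k) • Finsupp.single (v.insert k) 1 := by
  rw [psi, Finsupp.lsum_single]
  split_ifs <;> simp

namespace SIM

lemma seq_le_seq_zero (v : SIM) (i : ℕ) : v.seq i ≤ v.seq 0 :=
  v.strictAnti.antitone (Nat.zero_le i)

lemma exists_forall_le_mem_range (v : SIM) : ∃ L : ℤ, ∀ k ≤ L, k ∈ Set.range v.seq := by
  obtain ⟨m, N, hN⟩ := v.charge_exists
  exact ⟨m - N, fun k hk => ⟨(m - k).toNat, by rw [hN _ (by omega)]; omega⟩⟩

lemma seq_delIdx (v : SIM) {j : ℤ} (hj : j ∈ Set.range v.seq) : v.seq (v.delIdx j) = j := by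
  obtain ⟨i, rfl⟩ := hj
  have hi : i ∈ {n : ℕ | v.seq n ≤ v.seq i} := le_refl (v.seq i)
  have hle : v.delIdx (v.seq i) ≤ i := Nat.sInf_le hi
  have hmem : v.seq (v.delIdx (v.seq i)) ≤ v.seq i := Nat.sInf_mem ⟨i, hi⟩
  exact le_antisymm hmem (v.strictAnti.antitone hle)

lemma mem_range_delete (v : SIM) {j k : ℤ} (hj : j ∈ Set.range v.seq)
    (hk : k ∈ Set.range v.seq) (hkj : k ≠ j) : k ∈ Set.range (v.delete j).seq := by
  obtain ⟨i, rfl⟩ := hk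
  have hi : i ≠ v.delIdx j := fun h => hkj (h ▸ v.seq_delIdx hj)
  rcases lt_or_gt_of_ne hi with h | h
  · exact ⟨i, by simp [delete, h]⟩
  · exact ⟨i - 1, by simp only [delete]; rw [if_neg (by omega), Nat.sub_add_cancel (by omega)]⟩

end SIM

lemma psi_psiStar_single_of_not_mem {j : ℤ} {v : SIM} (hj : j ∉ Set.range v.seq) (k : ℤ) :
    psi k (psiStar j (Finsupp.single v 1)) = 0 := by
  rw [psiStar_single, if_neg hj, map_zero]

lemma psi_psiStar_single_of_mem {j k : ℤ} {v : SIM} (hk : k ∈ Set.range v.seq) (hkj : k ≠ j) :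
    psi k (psiStar j (Finsupp.single v 1)) = 0 := by
  by_cases hj : j ∈ Set.range v.seq
  · rw [psiStar_single, if_pos hj, map_smul, psi_single,
      if_pos (v.mem_range_delete hj hk hkj), smul_zero]
  · exact psi_psiStar_single_of_not_mem hj k

lemma Finsupp.existsUnique_linearMap_single_one {R M α : Type*} [Semiring R] [AddCommMonoid M]
    [Module R M] (f : α → M) : ∃! P : (α →₀ R) →ₗ[R] M, ∀ a, P (Finsupp.single a 1) = f a :=
  ⟨Finsupp.linearCombination R f, fun a => by simp,
    fun P hP => Finsupp.lhom_ext' fun a => LinearMap.ext_ring (by simp [hP])⟩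

/-- For a nonzero integer `n` and a basis vector `v` of `𝓕`,
`ψ(j+n)∘ψ*(j)(v) = 0` for all but finitely many integers `j`; consequently the
formula `p(n)(v) = Σ_{j∈ℤ} ψ(j+n)ψ*(j)(v)` defines a (unique) ℂ-linear operator
on `𝓕`. -/
theorem heisenberg_operator_well_defined (n : ℤ) (hn : n ≠ 0) (v : SIM) :
    {j : ℤ | psi (j + n) (psiStar j (Finsupp.single v 1)) ≠ 0}.Finite ∧
    ∃! P : Fock →ₗ[ℂ] Fock, ∀ w : SIM,
      P (Finsupp.single w 1) =
        ∑ᶠ j : ℤ, psi (j + n) (psiStar j (Finsupp.single w 1)) := by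
  refine ⟨?_, Finsupp.existsUnique_linearMap_single_one _⟩
  obtain ⟨L, hL⟩ := v.exists_forall_le_mem_range
  refine (Set.finite_Ioc (L - n) (v.seq 0)).subset fun j hj => ?_
  have hj_mem : j ∈ Set.range v.seq := by
    by_contra h
    exact hj (psi_psiStar_single_of_not_mem h _)
  have hjn_not_mem : j + n ∉ Set.range v.seq := fun h =>
    hj (psi_psiStar_single_of_mem h (by omega))
  obtain ⟨i, rfl⟩ := hj_mem
  exact ⟨not_le.mp fun h => hjn_not_mem (hL _ (by omega)), v.seq_le_seq_zero i⟩
end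

section
/- For every integer k ≥ 1 and every natural number n, the number of k-regular partitions of kn equals the number of k-tuples (λ₀, …, λ_{k−1}) of partitions with |λ₀| + ⋯ + |λ_{k−1}| = n; that is, there is a bijection (the k-quotient) between the set of k-regular partitions of kn and the set of k-tuples of partitions of total size n. -/
/-- A partition, presented as a weakly decreasing sequence of natural numbers
that is eventually zero. -/
structure PartitionSeq : Type where
  f : ℕ → ℕ
  antitone : ∀ j k, j ≤ k → f k ≤ f j
  eventually_zero : ∃ N, ∀ n ≥ N, f n = 0

namespace PartitionSeq

/-- The size `|λ|` of a partition: the total number of cells of its Young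
diagram, `Σ_a λ_a`. -/
noncomputable def size (P : PartitionSeq) : ℕ := ∑ᶠ a : ℕ, P.f a

/-- The Young diagram of a partition: the set of cells
`{(a,b) : b < λ_a}`. -/
def cells (P : PartitionSeq) : Set (ℕ × ℕ) := {p : ℕ × ℕ | p.2 < P.f p.1}

/-- The number of cells `(a,b)` of the Young diagram whose `k`-color, the
residue of `b - a` modulo `k`, equals `c`. -/
noncomputable def colorCount (P : PartitionSeq) (k : ℕ) (c : ℤ) : ℕ :=
  {p ∈ P.cells | ((p.2 : ℤ) - (p.1 : ℤ)) % (k : ℤ) = c}.ncard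

/-- A partition is `k`-regular if each of the `k` residue classes occurs as the
color of the same number of cells of its Young diagram. -/
def KRegular (P : PartitionSeq) (k : ℕ) : Prop :=
  ∀ c₁ ∈ Finset.range k, ∀ c₂ ∈ Finset.range k,
    P.colorCount k (c₁ : ℤ) = P.colorCount k (c₂ : ℤ)

/-- The conjugate partition evaluated at `b`: the number of cells in column
`b`. -/
noncomputable def conj (P : PartitionSeq) (b : ℕ) : ℕ := {a : ℕ | b < P.f a}.ncard

/-- The hook length of the cell `(a,b)`:
`h(a,b) = (λ_a − b) + (λ'_b − a) − 1`. -/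
noncomputable def hook (P : PartitionSeq) (p : ℕ × ℕ) : ℤ :=
  ((P.f p.1 : ℤ) - (p.2 : ℤ)) + ((P.conj p.2 : ℤ) - (p.1 : ℤ)) - 1

end PartitionSeq

open Finset
open scoped Classical

namespace KQ

/-- number of elements of `F` lying in `S` -/
noncomputable def cnt (S : Set ℤ) (F : Finset ℤ) : ℕ :=
  (F.filter (fun x => x ∈ S)).card

/-- `S` contains everything below `-M` and nothing at or above `M`. -/
def Bound (S : Set ℤ) (M : ℕ) : Prop :=
  (∀ x : ℤ, x < -(M:ℤ) → x ∈ S) ∧ (∀ x : ℤ, (M:ℤ) ≤ x → x ∉ S)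

noncomputable def box (M : ℕ) : Finset ℤ := Finset.Icc (-(M:ℤ)) ((M:ℤ)-1)

/-- charge-zero condition -/
def Charge0 (S : Set ℤ) : Prop := ∃ M, Bound S M ∧ cnt S (box M) = M

lemma Bound.mono {S : Set ℤ} {M M' : ℕ} (h : Bound S M) (hMM : M ≤ M') : Bound S M' := by
  constructor
  · intro x hx; exact h.1 x (lt_of_lt_of_le hx (by exact_mod_cast neg_le_neg (Int.ofNat_le.2 hMM)))
  · intro x hx; exact h.2 x (le_trans (by exact_mod_cast hMM) hx)

lemma cnt_box_succ {S : Set ℤ} {M : ℕ} (h : Bound S M) :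
    cnt S (box (M+1)) = cnt S (box M) + 1 := by
  classical
  have hmem : (-(M:ℤ)-1) ∈ S := h.1 _ (by push_cast; linarith)
  have hnot : ((M:ℤ)) ∉ S := h.2 _ le_rfl
  have hbox : box (M+1) = insert (-(M:ℤ)-1) (insert ((M:ℤ)) (box M)) := by
    ext x
    simp only [box, Finset.mem_Icc, Finset.mem_insert]
    push_cast
    omega
  rw [cnt, hbox]
  rw [Finset.filter_insert, Finset.filter_insert]
  rw [if_pos hmem, if_neg hnot]
  rw [Finset.card_insert_of_notMem]
  · rfl
  · simp only [Finset.mem_filter, box, Finset.mem_Icc]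
    push_cast
    omega

lemma cnt_box_add {S : Set ℤ} {M : ℕ} (h : Bound S M) (j : ℕ) :
    cnt S (box (M+j)) = cnt S (box M) + j := by
  induction j with
  | zero => rfl
  | succ j ih =>
      have h2 := cnt_box_succ (h.mono (Nat.le_add_right M j))
      have h3 : M + (j+1) = (M + j) + 1 := rfl
      rw [h3, h2, ih]; omega

lemma Charge0.cnt_box {S : Set ℤ} (hc : Charge0 S) {M : ℕ} (h : Bound S M) :
    cnt S (box M) = M := by
  obtain ⟨M₀, hB₀, hc₀⟩ := hc
  have h1 := cnt_box_add h (M₀)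
  have h2 := cnt_box_add hB₀ (M)
  have : M + M₀ = M₀ + M := by omega
  rw [this] at h1
  omega

end KQ
namespace KQ

/-- number of elements of `S` that are `≥ t` -/
noncomputable def Ac (S : Set ℤ) (t : ℤ) : ℕ := (S ∩ Set.Ici t).ncard

lemma Ac_eq {S : Set ℤ} {M : ℕ} (h : Bound S M) (t : ℤ) :
    Ac S t = cnt S (Finset.Icc t ((M:ℤ)-1)) := by
  rw [Ac, cnt, ← Set.ncard_coe_finset]
  congr 1
  ext x
  simp only [Set.mem_inter_iff, Set.mem_Ici, Finset.coe_filter, Finset.mem_Icc,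
    Set.mem_setOf_eq]
  constructor
  · rintro ⟨hx, ht⟩
    refine ⟨⟨ht, ?_⟩, hx⟩
    by_contra hcon
    exact h.2 x (by omega) hx
  · rintro ⟨⟨ht, _⟩, hx⟩; exact ⟨hx, ht⟩

lemma Ac_step {S : Set ℤ} {M : ℕ} (h : Bound S M) (t : ℤ) :
    Ac S t = Ac S (t+1) + (if t ∈ S then 1 else 0) := by
  classical
  rw [Ac_eq h, Ac_eq h, cnt, cnt]
  by_cases hM : t ≤ (M:ℤ) - 1
  · have : Finset.Icc t ((M:ℤ)-1) = insert t (Finset.Icc (t+1) ((M:ℤ)-1)) := by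
      ext x; simp only [Finset.mem_Icc, Finset.mem_insert]; omega
    rw [this, Finset.filter_insert]
    by_cases ht : t ∈ S
    · rw [if_pos ht, if_pos ht, Finset.card_insert_of_notMem]
      simp only [Finset.mem_filter, Finset.mem_Icc]
      omega
    · rw [if_neg ht, if_neg ht]; omega
  · have h1 : Finset.Icc t ((M:ℤ)-1) = ∅ := Finset.Icc_eq_empty (by omega)
    have h2 : Finset.Icc (t+1) ((M:ℤ)-1) = ∅ := Finset.Icc_eq_empty (by omega)
    have ht : t ∉ S := h.2 t (by omega)
    rw [h1, h2, if_neg ht]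
    simp

lemma Ac_anti {S : Set ℤ} {M : ℕ} (h : Bound S M) {t u : ℤ} (htu : t ≤ u) :
    Ac S u ≤ Ac S t := by
  rw [Ac_eq h, Ac_eq h, cnt, cnt]
  exact Finset.card_le_card (Finset.filter_subset_filter _ (Finset.Icc_subset_Icc_left htu))

lemma Ac_le {S : Set ℤ} {M : ℕ} (h : Bound S M) (t : ℤ) :
    Ac S t ≤ ((M:ℤ) - t).toNat := by
  rw [Ac_eq h, cnt]
  calc (Finset.filter (fun x => x ∈ S) (Finset.Icc t ((M:ℤ)-1))).card
      ≤ (Finset.Icc t ((M:ℤ)-1)).card :=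
        Finset.card_le_card (Finset.filter_subset _ _)
    _ ≤ ((M:ℤ) - t).toNat := by rw [Int.card_Icc]; omega

lemma Ac_lower {S : Set ℤ} (hc : Charge0 S) {t : ℤ} (ht : t ≤ 0) :
    -t ≤ (Ac S t : ℤ) := by
  classical
  obtain ⟨M₀, hB₀, -⟩ := id hc
  set M : ℕ := M₀ + (-t).toNat with hM
  have hB : Bound S M := hB₀.mono (Nat.le_add_right _ _)
  have hMt : -(M:ℤ) ≤ t := by
    have h0 := Int.toNat_of_nonneg (by omega : (0:ℤ) ≤ -t)
    simp only [hM]; push_cast; omega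
  have hcharge : cnt S (box M) = M := hc.cnt_box hB
  have hsplit : box M = Finset.Icc (-(M:ℤ)) (t-1) ∪ Finset.Icc t ((M:ℤ)-1) := by
    ext x; simp only [box, Finset.mem_Icc, Finset.mem_union]; omega
  have hdisj : Disjoint (Finset.Icc (-(M:ℤ)) (t-1)) (Finset.Icc t ((M:ℤ)-1)) := by
    rw [Finset.disjoint_left]; intro x hx hx'
    simp only [Finset.mem_Icc] at hx hx'; omega
  have : cnt S (box M) = cnt S (Finset.Icc (-(M:ℤ)) (t-1)) + cnt S (Finset.Icc t ((M:ℤ)-1)) := by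
    rw [cnt, hsplit, Finset.filter_union, Finset.card_union_of_disjoint]
    · rfl
    · exact Finset.disjoint_filter_filter hdisj
  have h1 : (cnt S (Finset.Icc (-(M:ℤ)) (t-1)) : ℤ) ≤ t + M := by
    calc (cnt S (Finset.Icc (-(M:ℤ)) (t-1)) : ℤ)
        ≤ ((Finset.Icc (-(M:ℤ)) (t-1)).card : ℤ) := by
          exact_mod_cast Finset.card_le_card (Finset.filter_subset _ _)
      _ ≤ t + M := by rw [Int.card_Icc]; omega
  rw [← Ac_eq hB] at this
  omega

lemma Ac_upper_neg {S : Set ℤ} (hc : Charge0 S) {M : ℕ} (hB : Bound S M) {t : ℤ}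
    (ht : t ≤ -(M:ℤ)) : (Ac S t : ℤ) ≤ -t := by
  classical
  have hcharge : cnt S (box M) = M := hc.cnt_box hB
  have hsplit : Finset.Icc t ((M:ℤ)-1) = Finset.Icc t (-(M:ℤ)-1) ∪ box M := by
    ext x; simp only [box, Finset.mem_Icc, Finset.mem_union]; omega
  rw [Ac_eq hB, cnt, hsplit, Finset.filter_union]
  calc ((Finset.filter (fun x => x ∈ S) (Finset.Icc t (-(M:ℤ)-1)) ∪
          Finset.filter (fun x => x ∈ S) (box M)).card : ℤ)
      ≤ ((Finset.filter (fun x => x ∈ S) (Finset.Icc t (-(M:ℤ)-1))).card : ℤ) +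
          ((Finset.filter (fun x => x ∈ S) (box M)).card : ℤ) := by
        exact_mod_cast Finset.card_union_le _ _
    _ ≤ ((Finset.Icc t (-(M:ℤ)-1)).card : ℤ) + M := by
        have := Finset.card_le_card (Finset.filter_subset (fun x => x ∈ S) (Finset.Icc t (-(M:ℤ)-1)))
        have h2 : (Finset.filter (fun x => x ∈ S) (box M)).card = M := hcharge
        omega
    _ ≤ -t := by rw [Int.card_Icc]; omega

end KQ
namespace KQ

/-- the `a`-th largest element of `S` -/
noncomputable def sfun (S : Set ℤ) (a : ℕ) : ℤ := sSup {x : ℤ | a + 1 ≤ Ac S x}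

section sfun
variable {S : Set ℤ} (hc : Charge0 S)
include hc

lemma sfun_set_nonempty (a : ℕ) : {x : ℤ | a + 1 ≤ Ac S x}.Nonempty := by
  refine ⟨-(a:ℤ)-1, ?_⟩
  have := Ac_lower hc (t := -(a:ℤ)-1) (by omega)
  simp only [Set.mem_setOf_eq]
  omega

lemma sfun_set_bddAbove (a : ℕ) : BddAbove {x : ℤ | a + 1 ≤ Ac S x} := by
  obtain ⟨M, hB, -⟩ := id hc
  refine ⟨(M:ℤ), ?_⟩
  intro x hx
  simp only [Set.mem_setOf_eq] at hx
  by_contra hcon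
  have := Ac_le hB x
  push_neg at hcon
  have : Ac S x = 0 := by omega
  omega

lemma sfun_spec (a : ℕ) : a + 1 ≤ Ac S (sfun S a) :=
  Int.csSup_mem (sfun_set_nonempty hc a) (sfun_set_bddAbove hc a)

lemma sfun_ge (a : ℕ) : -(a:ℤ)-1 ≤ sfun S a := by
  apply le_csSup (sfun_set_bddAbove hc a)
  have := Ac_lower hc (t := -(a:ℤ)-1) (by omega)
  simp only [Set.mem_setOf_eq]
  omega

lemma sfun_mem (a : ℕ) : sfun S a ∈ S := by
  obtain ⟨M, hB, -⟩ := id hc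
  by_contra hcon
  have h1 : Ac S (sfun S a) = Ac S (sfun S a + 1) := by
    rw [Ac_step hB (sfun S a), if_neg hcon]; omega
  have h2 : sfun S a + 1 ∈ {x : ℤ | a + 1 ≤ Ac S x} := by
    simp only [Set.mem_setOf_eq]
    rw [← h1]
    exact sfun_spec hc a
  have := le_csSup (sfun_set_bddAbove hc a) h2
  simp only [sfun] at this ⊢
  omega

lemma Ac_sfun (a : ℕ) : Ac S (sfun S a) = a + 1 := by
  obtain ⟨M, hB, -⟩ := id hc
  have h1 := sfun_spec hc a
  have h2 : Ac S (sfun S a + 1) ≤ a := by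
    by_contra hcon
    have h2 : sfun S a + 1 ∈ {x : ℤ | a + 1 ≤ Ac S x} := by
      simp only [Set.mem_setOf_eq]; omega
    have := le_csSup (sfun_set_bddAbove hc a) h2
    simp only [sfun] at this; omega
  have h3 := Ac_step hB (sfun S a)
  rw [if_pos (sfun_mem hc a)] at h3
  omega

lemma sfun_strictAnti {a b : ℕ} (hab : a < b) : sfun S b < sfun S a := by
  obtain ⟨M, hB, -⟩ := id hc
  by_contra hcon
  push_neg at hcon
  have := Ac_anti hB hcon
  rw [Ac_sfun hc, Ac_sfun hc] at this
  omega

lemma sfun_inj : Function.Injective (sfun S) := by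
  intro a b hab
  rcases lt_trichotomy a b with h | h | h
  · exact absurd hab (ne_of_gt (sfun_strictAnti hc h))
  · exact h
  · exact absurd hab (ne_of_lt (sfun_strictAnti hc h))

lemma sfun_of_mem {x : ℤ} (hx : x ∈ S) : sfun S (Ac S x - 1) = x := by
  obtain ⟨M, hB, -⟩ := id hc
  have h1 : 1 ≤ Ac S x := by
    have := Ac_step hB x
    rw [if_pos hx] at this
    omega
  apply le_antisymm
  · -- sup ≤ x : every y > x has Ac S y < Ac S x
    apply csSup_le (sfun_set_nonempty hc _)
    intro y hy
    simp only [Set.mem_setOf_eq] at hy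
    by_contra hcon
    push_neg at hcon
    have hxy : x + 1 ≤ y := by omega
    have h2 := Ac_anti hB hxy
    have h3 := Ac_step hB x
    rw [if_pos hx] at h3
    omega
  · apply le_csSup (sfun_set_bddAbove hc _)
    simp only [Set.mem_setOf_eq]
    omega

lemma sfun_of_large {M : ℕ} (hB : Bound S M) {a : ℕ} (ha : M ≤ a) :
    sfun S a = -(a:ℤ)-1 := by
  refine le_antisymm ?_ (sfun_ge hc a)
  apply csSup_le (sfun_set_nonempty hc _)
  intro y hy
  simp only [Set.mem_setOf_eq] at hy
  -- Ac S y ≥ a+1 ≥ M+1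
  have h1 : ¬ (-(M:ℤ) ≤ y) := by
    intro hcon
    have h2 := Ac_anti hB hcon
    have h3 : Ac S (-(M:ℤ)) = cnt S (box M) := by
      rw [Ac_eq hB]; rfl
    have h4 := hc.cnt_box hB
    omega
  push_neg at h1
  have h5 := Ac_upper_neg hc hB (le_of_lt (by omega : y < -(M:ℤ)))
  omega

end sfun
end KQ
namespace KQ

lemma PartitionSeq.ext' {P Q : PartitionSeq} (h : P.f = Q.f) : P = Q := by
  cases P; cases Q; cases h; rfl

/-- the partition associated to a charge-zero set -/
noncomputable def toPart (S : Set ℤ) (hc : Charge0 S) : PartitionSeq where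
  f a := (sfun S a + a + 1).toNat
  antitone := by
    intro a b hab
    have h1 : sfun S b + b ≤ sfun S a + a := by
      induction b with
      | zero => have : a = 0 := Nat.le_zero.mp hab; subst this; omega
      | succ b ih =>
          rcases Nat.lt_or_ge a (b+1) with h | h
          · have hab' : a ≤ b := by omega
            have := sfun_strictAnti hc (show b < b + 1 by omega)
            have := ih hab'
            push_cast
            omega
          · have : a = b + 1 := by omega
            subst this; omega
    apply Int.toNat_le_toNat
    omega
  eventually_zero := by
    obtain ⟨M, hB, -⟩ := id hc
    refine ⟨M, fun a ha => ?_⟩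
    show (sfun S a + a + 1).toNat = 0
    rw [sfun_of_large hc hB ha]
    omega

/-- the first-column hook lengths (beta numbers) of a partition -/
def beta (P : PartitionSeq) (a : ℕ) : ℤ := (P.f a : ℤ) - 1 - a

def betaSet (P : PartitionSeq) : Set ℤ := Set.range (beta P)

lemma beta_strictAnti (P : PartitionSeq) {a b : ℕ} (hab : a < b) :
    beta P b < beta P a := by
  have := P.antitone a b (le_of_lt hab)
  unfold beta
  omega

lemma beta_inj (P : PartitionSeq) : Function.Injective (beta P) := by
  intro a b hab
  rcases lt_trichotomy a b with h | h | h
  · exact absurd hab (ne_of_gt (beta_strictAnti P h))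
  · exact h
  · exact absurd hab (ne_of_lt (beta_strictAnti P h))

/-- `M` is a good bound for the partition `P` -/
def Good (P : PartitionSeq) (M : ℕ) : Prop := (∀ a, M ≤ a → P.f a = 0) ∧ P.f 0 ≤ M

lemma good_exists (P : PartitionSeq) : ∃ M, Good P M := by
  obtain ⟨N, hN⟩ := P.eventually_zero
  exact ⟨N + P.f 0, fun a ha => hN a (by omega), by omega⟩

lemma Good.mono {P : PartitionSeq} {M M' : ℕ} (h : Good P M) (hMM : M ≤ M') : Good P M' :=
  ⟨fun a ha => h.1 a (by omega), by have := h.2; omega⟩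

section goodfacts
variable {P : PartitionSeq} {M : ℕ} (hg : Good P M)
include hg

lemma beta_of_large {a : ℕ} (ha : M ≤ a) : beta P a = -1 - a := by
  unfold beta; rw [hg.1 a ha]; simp

lemma beta_le (a : ℕ) : beta P a ≤ (M:ℤ) - 1 := by
  have h1 : P.f a ≤ P.f 0 := P.antitone 0 a (Nat.zero_le a)
  have h2 := hg.2
  unfold beta
  omega

/-- the elements of `betaSet P` that are `≥ beta P a` are exactly `beta 0, …, beta a` -/
lemma filter_Icc_beta (a : ℕ) :
    (Finset.Icc (beta P a) ((M:ℤ)-1)).filter (fun x => x ∈ betaSet P) =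
      (Finset.range (a+1)).image (beta P) := by
  classical
  ext x
  simp only [Finset.mem_filter, Finset.mem_Icc, Finset.mem_image, Finset.mem_range,
    betaSet, Set.mem_range]
  constructor
  · rintro ⟨⟨h1, h2⟩, b, rfl⟩
    refine ⟨b, ?_, rfl⟩
    by_contra hcon
    exact absurd h1 (not_le.mpr (beta_strictAnti P (by omega)))
  · rintro ⟨b, hb, rfl⟩
    have h1 : beta P a ≤ beta P b := by
      rcases Nat.lt_or_ge b a with h | h
      · exact le_of_lt (beta_strictAnti P h)
      · have : b = a := by omega
        subst this; exact le_refl _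
    exact ⟨⟨h1, beta_le hg b⟩, b, rfl⟩

lemma bound_betaSet : Bound (betaSet P) M := by
  constructor
  · intro x hx
    have hxa : (0:ℤ) ≤ -1 - x := by omega
    refine ⟨(-1-x).toNat, ?_⟩
    have h1 : ((-1-x).toNat : ℤ) = -1-x := Int.toNat_of_nonneg hxa
    have h2 : M ≤ (-1-x).toNat := by omega
    rw [beta_of_large hg h2]
    omega
  · rintro x hx ⟨a, rfl⟩
    have := beta_le hg a
    omega

lemma Ac_betaSet (a : ℕ) : Ac (betaSet P) (beta P a) = a + 1 := by
  rw [Ac_eq (bound_betaSet hg), cnt, filter_Icc_beta hg a,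
    Finset.card_image_of_injective _ (beta_inj P), Finset.card_range]

lemma charge0_betaSet : Charge0 (betaSet P) := by
  classical
  refine ⟨M, bound_betaSet hg, ?_⟩
  have h1 : (box M).filter (fun x => x ∈ betaSet P) = (Finset.range M).image (beta P) := by
    ext x
    simp only [Finset.mem_filter, box, Finset.mem_Icc, Finset.mem_image, Finset.mem_range,
      betaSet, Set.mem_range]
    constructor
    · rintro ⟨⟨h1, h2⟩, b, rfl⟩
      refine ⟨b, ?_, rfl⟩
      by_contra hcon
      push_neg at hcon
      rw [beta_of_large hg hcon] at h1
      omega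
    · rintro ⟨b, hb, rfl⟩
      have h2 := beta_le hg b
      have h3 : -(b:ℤ) - 1 ≤ beta P b := by unfold beta; omega
      exact ⟨⟨by omega, h2⟩, b, rfl⟩
  rw [cnt, h1, Finset.card_image_of_injective _ (beta_inj P), Finset.card_range]

lemma sfun_betaSet (a : ℕ) : sfun (betaSet P) a = beta P a := by
  have hc := charge0_betaSet hg
  apply le_antisymm
  · -- sup is an element beta a' with Ac = a'+1 ≥ a+1, so a' ≥ a, so beta a' ≤ beta a
    obtain ⟨a', ha'⟩ := sfun_mem hc a
    have h1 := sfun_spec hc a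
    rw [← ha', Ac_betaSet hg a'] at h1
    rw [← ha']
    rcases Nat.lt_or_ge a' a with h | h
    · omega
    · rcases Nat.lt_or_ge a a' with h2 | h2
      · exact le_of_lt (beta_strictAnti P h2)
      · have : a = a' := by omega
        subst this; exact le_refl _
  · apply le_csSup (sfun_set_bddAbove hc a)
    simp only [Set.mem_setOf_eq]
    rw [Ac_betaSet hg a]

end goodfacts

/-- Roundtrip 1: from a partition to its beta set and back. -/
lemma toPart_betaSet (P : PartitionSeq) (hc : Charge0 (betaSet P)) :
    toPart (betaSet P) hc = P := by
  apply PartitionSeq.ext'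
  funext a
  obtain ⟨M, hg⟩ := good_exists P
  show (sfun (betaSet P) a + a + 1).toNat = P.f a
  rw [sfun_betaSet hg a]
  unfold beta
  omega

/-- Roundtrip 2: from a charge-zero set to a partition and back. -/
lemma betaSet_toPart (S : Set ℤ) (hc : Charge0 S) : betaSet (toPart S hc) = S := by
  have hbeta : ∀ a, beta (toPart S hc) a = sfun S a := by
    intro a
    have h1 := sfun_ge hc a
    show ((sfun S a + a + 1).toNat : ℤ) - 1 - a = sfun S a
    rw [Int.toNat_of_nonneg (by omega)]
    ring
  ext x
  constructor
  · rintro ⟨a, rfl⟩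
    rw [hbeta a]
    exact sfun_mem hc a
  · intro hx
    exact ⟨Ac S x - 1, by rw [hbeta]; exact sfun_of_mem hc hx⟩

end KQ
namespace KQ

def splitS (k i : ℕ) (S : Set ℤ) : Set ℤ := {q : ℤ | (k:ℤ) * q + i ∈ S}

def joinS (k : ℕ) (T : ℕ → Set ℤ) : Set ℤ :=
  {x : ℤ | ∃ i : ℕ, i < k ∧ ∃ q : ℤ, x = (k:ℤ) * q + i ∧ q ∈ T i}

lemma kmul_lt_iff {k i j : ℕ} (hi : i < k) (hj : j < k) (a b : ℤ) :
    (k:ℤ)*b + j < (k:ℤ)*a + i ↔ (b < a ∨ (b = a ∧ j < i)) := by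
  have hk : (1:ℤ) ≤ k := by exact_mod_cast Nat.one_le_iff_ne_zero.mpr (by omega)
  constructor
  · intro h
    rcases lt_trichotomy b a with hba | hba | hba
    · exact Or.inl hba
    · subst hba
      refine Or.inr ⟨rfl, ?_⟩
      exact_mod_cast (by omega : (j:ℤ) < i)
    · exfalso
      have h1 : (k:ℤ)*(a+1) ≤ k*b := mul_le_mul_of_nonneg_left (by omega) (by omega)
      have hi' : (i:ℤ) < k := by exact_mod_cast hi
      have hj' : (0:ℤ) ≤ j := by positivity
      nlinarith
  · rintro (hba | ⟨rfl, hji⟩)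
    · have h1 : (k:ℤ)*(b+1) ≤ k*a := mul_le_mul_of_nonneg_left (by omega) (by omega)
      have hj' : (j:ℤ) < k := by exact_mod_cast hj
      have hi' : (0:ℤ) ≤ i := by positivity
      nlinarith
    · have : (j:ℤ) < i := by exact_mod_cast hji
      omega

lemma kdecomp_unique {k i j : ℕ} (hi : i < k) (hj : j < k) {q q' : ℤ}
    (h : (k:ℤ)*q + i = (k:ℤ)*q' + j) : q = q' ∧ i = j := by
  have hq : q = q' := by
    rcases lt_trichotomy q q' with hc | hc | hc
    · have := (kmul_lt_iff hj hi q' q).mpr (Or.inl hc); omega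
    · exact hc
    · have := (kmul_lt_iff hi hj q q').mpr (Or.inl hc); omega
  subst hq
  have : (i:ℤ) = j := by omega
  exact ⟨rfl, by exact_mod_cast this⟩

lemma kdecomp_exists {k : ℕ} (hk : 1 ≤ k) (x : ℤ) :
    ∃ i : ℕ, i < k ∧ ∃ q : ℤ, x = (k:ℤ)*q + i := by
  have hk' : (0:ℤ) < k := by exact_mod_cast hk
  refine ⟨(x % k).toNat, ?_, x / k, ?_⟩
  · have h1 := Int.emod_lt_of_pos x hk'
    have h2 := Int.emod_nonneg x (by omega : (k:ℤ) ≠ 0)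
    omega
  · have h1 := Int.mul_ediv_add_emod x k
    have h2 := Int.emod_nonneg x (by omega : (k:ℤ) ≠ 0)
    rw [Int.toNat_of_nonneg h2]
    omega

lemma split_join {k i : ℕ} (hi : i < k) (T : ℕ → Set ℤ) :
    splitS k i (joinS k T) = T i := by
  ext q
  simp only [splitS, joinS, Set.mem_setOf_eq]
  constructor
  · rintro ⟨j, hj, q', hq', hmem⟩
    obtain ⟨hqq, hij⟩ := kdecomp_unique hi hj hq'
    subst hqq; subst hij; exact hmem
  · intro h
    exact ⟨i, hi, q, rfl, h⟩

lemma join_split {k : ℕ} (hk : 1 ≤ k) (S : Set ℤ) :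
    joinS k (fun i => splitS k i S) = S := by
  ext x
  simp only [joinS, splitS, Set.mem_setOf_eq]
  constructor
  · rintro ⟨i, hi, q, rfl, hmem⟩
    exact hmem
  · intro hx
    obtain ⟨i, hi, q, rfl⟩ := kdecomp_exists hk x
    exact ⟨i, hi, q, rfl, hx⟩

lemma box_mul_mem {k M i : ℕ} (hi : i < k) (q : ℤ) :
    ((k:ℤ)*q + i ∈ box (k*M)) ↔ q ∈ box M := by
  have hk : (1:ℤ) ≤ k := by exact_mod_cast Nat.one_le_iff_ne_zero.mpr (by omega)
  have hi' : (i:ℤ) < k := by exact_mod_cast hi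
  have hi0 : (0:ℤ) ≤ i := by positivity
  simp only [box, Finset.mem_Icc]
  push_cast
  constructor
  · rintro ⟨h1, h2⟩
    constructor
    · by_contra hcon
      push_neg at hcon
      have : (k:ℤ)*q ≤ k*(-(M:ℤ)-1) := mul_le_mul_of_nonneg_left (by omega) (by omega)
      nlinarith
    · by_contra hcon
      push_neg at hcon
      have : (k:ℤ)*(M:ℤ) ≤ k*q := mul_le_mul_of_nonneg_left (by omega) (by omega)
      nlinarith
  · rintro ⟨h1, h2⟩
    have ha : (k:ℤ)*(-(M:ℤ)) ≤ k*q := mul_le_mul_of_nonneg_left h1 (by omega)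
    have hb : (k:ℤ)*q ≤ k*((M:ℤ)-1) := mul_le_mul_of_nonneg_left h2 (by omega)
    constructor
    · nlinarith
    · nlinarith

lemma bound_splitS {k i M : ℕ} (hi : i < k) {S : Set ℤ} (hB : Bound S M) :
    Bound (splitS k i S) M := by
  have hk : (1:ℤ) ≤ k := by exact_mod_cast Nat.one_le_iff_ne_zero.mpr (by omega)
  have hi' : (i:ℤ) < k := by exact_mod_cast hi
  have hi0 : (0:ℤ) ≤ i := by positivity
  constructor
  · intro q hq
    apply hB.1
    have : (k:ℤ)*q ≤ k*(-(M:ℤ)-1) := mul_le_mul_of_nonneg_left (by omega) (by omega)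
    have hM0 : (0:ℤ) ≤ M := by positivity
    nlinarith
  · intro q hq
    apply hB.2
    have h2 : (k:ℤ)*(M:ℤ) ≤ k*q := mul_le_mul_of_nonneg_left hq (by omega)
    nlinarith

lemma cnt_box_mul {k M : ℕ} (hk : 1 ≤ k) (S : Set ℤ) :
    cnt S (box (k*M)) = ∑ i ∈ Finset.range k, cnt (splitS k i S) (box M) := by
  classical
  have hk' : (0:ℤ) < k := by exact_mod_cast hk
  rw [cnt]
  rw [Finset.card_eq_sum_card_fiberwise
    (f := fun x : ℤ => (x % k).toNat) (t := Finset.range k) ?hmem]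
  case hmem =>
    intro x hx
    simp only [Finset.mem_coe, Finset.mem_range]
    have h1 := Int.emod_lt_of_pos x hk'
    have h2 := Int.emod_nonneg x (by omega : (k:ℤ) ≠ 0)
    omega
  apply Finset.sum_congr rfl
  intro i hi
  simp only [Finset.mem_range] at hi
  rw [cnt]
  refine Finset.card_bij' (fun (x : ℤ) _ => x / (k:ℤ)) (fun (q : ℤ) _ => (k:ℤ)*q + (i:ℤ)) ?_ ?_ ?_ ?_
  · -- maps into target
    intro x hx
    simp only [Finset.mem_filter] at hx ⊢
    obtain ⟨⟨hx1, hx2⟩, hx3⟩ := hx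
    have h2 := Int.emod_nonneg x (by omega : (k:ℤ) ≠ 0)
    have hxd : x = (k:ℤ)*(x/k) + i := by
      have h1 := Int.mul_ediv_add_emod x k
      have : ((x % (k:ℤ)).toNat : ℤ) = x % k := Int.toNat_of_nonneg h2
      omega
    constructor
    · rw [← box_mul_mem hi (x/k), ← hxd]; exact hx1
    · show (k:ℤ)*(x/k) + i ∈ S
      rw [← hxd]; exact hx2
  · intro q hq
    simp only [Finset.mem_filter] at hq ⊢
    refine ⟨⟨(box_mul_mem hi q).mpr hq.1, hq.2⟩, ?_⟩
    have : ((k:ℤ)*q + i) % k = i := by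
      rw [add_comm, Int.add_mul_emod_self_left]
      exact Int.emod_eq_of_lt (by positivity) (by exact_mod_cast hi)
    rw [this]
    simp
  · intro x hx
    simp only [Finset.mem_filter] at hx
    obtain ⟨⟨hx1, hx2⟩, hx3⟩ := hx
    have h2 := Int.emod_nonneg x (by omega : (k:ℤ) ≠ 0)
    have h1 := Int.mul_ediv_add_emod x k
    have h4 : ((x % (k:ℤ)).toNat : ℤ) = x % k := Int.toNat_of_nonneg h2
    show (k:ℤ)*(x/k) + (i:ℤ) = x
    omega
  · intro q hq
    show ((k:ℤ)*q + i) / k = q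
    rw [add_comm, Int.add_mul_ediv_left _ q (by omega : (k:ℤ) ≠ 0),
      Int.ediv_eq_zero_of_lt (by positivity) (by exact_mod_cast hi)]
    omega

end KQ
namespace KQ

lemma bound_joinS {k M : ℕ} (hk : 1 ≤ k) {T : ℕ → Set ℤ}
    (hB : ∀ i, i < k → Bound (T i) M) : Bound (joinS k T) (k*M) := by
  have hk' : (1:ℤ) ≤ k := by exact_mod_cast hk
  constructor
  · intro x hx
    obtain ⟨i, hi, q, rfl⟩ := kdecomp_exists hk x
    refine ⟨i, hi, q, rfl, ?_⟩
    apply (hB i hi).1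
    have hi' : (i:ℤ) < k := by exact_mod_cast hi
    by_contra hcon
    push_neg at hcon
    have : (k:ℤ)*(-(M:ℤ)) ≤ k*q := mul_le_mul_of_nonneg_left hcon (by omega)
    push_cast at hx
    nlinarith
  · rintro x hx ⟨i, hi, q, rfl, hmem⟩
    have hi' : (i:ℤ) < k := by exact_mod_cast hi
    have hi0 : (0:ℤ) ≤ i := by positivity
    refine (hB i hi).2 q ?_ hmem
    by_contra hcon
    push_neg at hcon
    have : (k:ℤ)*q ≤ k*((M:ℤ)-1) := mul_le_mul_of_nonneg_left (by omega) (by omega)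
    push_cast at hx
    nlinarith

lemma charge0_joinS {k M : ℕ} (hk : 1 ≤ k) {T : ℕ → Set ℤ}
    (hB : ∀ i, i < k → Bound (T i) M) (hc : ∀ i, i < k → Charge0 (T i)) :
    Charge0 (joinS k T) := by
  refine ⟨k*M, bound_joinS hk hB, ?_⟩
  rw [cnt_box_mul hk]
  calc ∑ i ∈ Finset.range k, cnt (splitS k i (joinS k T)) (box M)
      = ∑ i ∈ Finset.range k, M := by
        apply Finset.sum_congr rfl
        intro i hi
        simp only [Finset.mem_range] at hi
        rw [split_join hi]
        exact (hc i hi).cnt_box (hB i hi)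
    _ = k * M := by rw [Finset.sum_const, Finset.card_range, smul_eq_mul]

/-- the number of pairs `(x,y)` with `x ∈ S`, `y ∉ S`, `y < x` (within a box) -/
noncomputable def PC (S : Set ℤ) (M : ℕ) : ℕ :=
  ((box M ×ˢ box M).filter (fun p => p.1 ∈ S ∧ p.2 ∉ S ∧ p.2 < p.1)).card

lemma PC_succ {S : Set ℤ} {M : ℕ} (h : Bound S M) : PC S (M+1) = PC S M := by
  classical
  unfold PC
  congr 1
  ext p
  simp only [Finset.mem_filter, Finset.mem_product, box, Finset.mem_Icc]
  constructor
  · rintro ⟨⟨⟨h1, h2⟩, h3, h4⟩, h5, h6, h7⟩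
    have hp1 : p.1 ≤ (M:ℤ) - 1 := by
      by_contra hcon
      exact h.2 p.1 (by omega) h5
    have hp2 : -(M:ℤ) ≤ p.2 := by
      by_contra hcon
      exact h6 (h.1 p.2 (by omega))
    have hp1' : -(M:ℤ) ≤ p.1 := by omega
    have hp2' : p.2 ≤ (M:ℤ) - 1 := by omega
    exact ⟨⟨⟨hp1', hp1⟩, hp2, hp2'⟩, h5, h6, h7⟩
  · rintro ⟨⟨⟨h1, h2⟩, h3, h4⟩, h5, h6, h7⟩
    push_cast
    refine ⟨⟨⟨by omega, by omega⟩, by omega, by omega⟩, h5, h6, h7⟩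

lemma PC_eq {S : Set ℤ} {M M' : ℕ} (h : Bound S M) (h' : Bound S M') :
    PC S M = PC S M' := by
  have key : ∀ (L : ℕ) (j : ℕ), Bound S L → PC S (L + j) = PC S L := by
    intro L j hL
    induction j with
    | zero => rfl
    | succ j ih =>
        have : L + (j+1) = (L + j) + 1 := rfl
        rw [this, PC_succ (hL.mono (Nat.le_add_right L j)), ih]
  have h1 := key M (M') h
  have h2 := key M' (M) h'
  rw [Nat.add_comm] at h1
  omega

lemma beta_mem_box_iff {P : PartitionSeq} {M : ℕ} (hg : Good P M) (b : ℕ) :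
    beta P b ∈ box M ↔ b < M := by
  simp only [box, Finset.mem_Icc]
  constructor
  · rintro ⟨h1, h2⟩
    by_contra hcon
    push_neg at hcon
    rw [beta_of_large hg hcon] at h1
    omega
  · intro hb
    have h2 := beta_le hg b
    have h3 : -(b:ℤ) - 1 ≤ beta P b := by unfold beta; omega
    constructor <;> omega

/-- size as a finite sum over a good range -/
lemma size_eq_sum {P : PartitionSeq} {M : ℕ} (hg : Good P M) :
    P.size = ∑ a ∈ Finset.range M, P.f a := by
  rw [PartitionSeq.size]
  apply finsum_eq_sum_of_support_subset
  intro a ha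
  simp only [Function.mem_support] at ha
  simp only [Finset.coe_range, Set.mem_Iio]
  by_contra hcon
  exact ha (hg.1 a (by omega))

lemma row_count {P : PartitionSeq} {M : ℕ} (hg : Good P M) {a : ℕ} (ha : a < M) :
    ((box M).filter (fun y => y ∉ betaSet P ∧ y < beta P a)).card = P.f a := by
  classical
  have h1 : (box M).filter (fun y => y ∉ betaSet P ∧ y < beta P a)
      = (Finset.Icc (-(M:ℤ)) (beta P a - 1)).filter (fun y => y ∉ betaSet P) := by
    ext y
    simp only [Finset.mem_filter, box, Finset.mem_Icc]
    constructor
    · rintro ⟨⟨hy1, hy2⟩, hy3, hy4⟩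
      exact ⟨⟨hy1, by omega⟩, hy3⟩
    · rintro ⟨⟨hy1, hy2⟩, hy3⟩
      have h2 := beta_le hg a
      exact ⟨⟨hy1, by omega⟩, hy3, by omega⟩
  rw [h1]
  have h2 : (Finset.Icc (-(M:ℤ)) (beta P a - 1)).filter (fun y => y ∈ betaSet P)
      = (Finset.Ioo a M).image (beta P) := by
    ext y
    simp only [Finset.mem_filter, Finset.mem_Icc, Finset.mem_image, Finset.mem_Ioo,
      betaSet, Set.mem_range]
    constructor
    · rintro ⟨⟨hy1, hy2⟩, b, rfl⟩
      have hab : a < b := by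
        by_contra hcon
        push_neg at hcon
        have h5 : beta P a ≤ beta P b := by
          rcases Nat.lt_or_ge b a with h | h
          · exact le_of_lt (beta_strictAnti P h)
          · have hba : b = a := by omega
            subst hba; exact le_refl _
        omega
      have hbM : b < M := by
        by_contra hcon
        push_neg at hcon
        rw [beta_of_large hg hcon] at hy1
        omega
      exact ⟨b, ⟨hab, hbM⟩, rfl⟩
    · rintro ⟨b, ⟨hb1, hb2⟩, rfl⟩
      have h3 : beta P b < beta P a := beta_strictAnti P hb1
      have h4 : -(b:ℤ) - 1 ≤ beta P b := by unfold beta; omega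
      exact ⟨⟨by omega, by omega⟩, b, rfl⟩
  have h3 := Finset.card_filter_add_card_filter_not
    (s := Finset.Icc (-(M:ℤ)) (beta P a - 1)) (p := fun y => y ∈ betaSet P)
  rw [h2] at h3
  have h4 : ((Finset.Ioo a M).image (beta P)).card = M - a - 1 := by
    rw [Finset.card_image_of_injective _ (beta_inj P), Nat.card_Ioo]
  have h5 : (Finset.Icc (-(M:ℤ)) (beta P a - 1)).card = (beta P a + M).toNat := by
    rw [Int.card_Icc]; congr 1; ring
  have h6 : -(a:ℤ) - 1 ≤ beta P a := by unfold beta; omega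
  have h7 : (beta P a + M).toNat = P.f a + M - a - 1 := by
    unfold beta at h6 ⊢
    omega
  have h8 : (fun y => ¬ (y ∈ betaSet P)) = (fun y => y ∉ betaSet P) := rfl
  rw [h4, h5, h7] at h3
  omega

lemma size_eq_PC {P : PartitionSeq} {M : ℕ} (hg : Good P M) :
    P.size = PC (betaSet P) M := by
  classical
  rw [size_eq_sum hg, PC]
  rw [Finset.card_eq_sum_card_fiberwise
    (f := fun p : ℤ × ℤ => p.1) (t := (Finset.range M).image (beta P)) ?hmem]
  case hmem =>
    rintro ⟨x, y⟩ hp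
    simp only [Finset.mem_coe, Finset.mem_filter, Finset.mem_product] at hp
    obtain ⟨⟨hx, hy⟩, hxS, hyS, hlt⟩ := hp
    obtain ⟨b, rfl⟩ := hxS
    simp only [Finset.mem_coe, Finset.mem_image, Finset.mem_range]
    exact ⟨b, (beta_mem_box_iff hg b).mp hx, rfl⟩
  rw [Finset.sum_image (fun a _ b _ h => beta_inj P h)]
  apply Finset.sum_congr rfl
  intro a ha
  simp only [Finset.mem_range] at ha
  rw [← row_count hg ha]
  apply Finset.card_bij' (fun (y : ℤ) _ => ((beta P a : ℤ), y)) (fun (p : ℤ × ℤ) _ => p.2)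
  · intro y hy
    simp only [Finset.mem_filter, Finset.mem_product] at hy ⊢
    obtain ⟨hybox, hyS, hlt⟩ := hy
    exact ⟨⟨⟨(beta_mem_box_iff hg a).mpr ha, hybox⟩, ⟨a, rfl⟩, hyS, hlt⟩, trivial⟩
  · rintro ⟨x, y⟩ hp
    simp only [Finset.mem_filter, Finset.mem_product] at hp ⊢
    obtain ⟨⟨⟨hx, hy⟩, hxS, hyS, hlt⟩, heq⟩ := hp
    subst heq
    exact ⟨hy, hyS, hlt⟩
  · intro y hy
    rfl
  · rintro ⟨x, y⟩ hp
    simp only [Finset.mem_filter] at hp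
    obtain ⟨-, heq⟩ := hp
    simp only [← heq]

end KQ
namespace KQ

noncomputable def Jcnt (k : ℕ) (c u v : ℤ) : ℕ :=
  ((Finset.Icc u v).filter (fun t => t % (k:ℤ) = c % (k:ℤ))).card

lemma Jcnt_succ (k : ℕ) (c u : ℤ) {v : ℤ} (huv : u ≤ v + 1) :
    Jcnt k c u (v+1) = Jcnt k c u v + (if (v+1) % (k:ℤ) = c % (k:ℤ) then 1 else 0) := by
  classical
  unfold Jcnt
  have hins : Finset.Icc u (v+1) = insert (v+1) (Finset.Icc u v) := by
    ext x; simp only [Finset.mem_Icc, Finset.mem_insert]; omega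
  rw [hins, Finset.filter_insert]
  by_cases h : (v+1) % (k:ℤ) = c % (k:ℤ)
  · rw [if_pos h, if_pos h, Finset.card_insert_of_notMem]
    simp only [Finset.mem_filter, Finset.mem_Icc]
    omega
  · rw [if_neg h, if_neg h]
    omega

lemma mod_succ_iff (k : ℕ) (v c : ℤ) :
    (v+1) % (k:ℤ) = (c+1) % (k:ℤ) ↔ v % (k:ℤ) = c % (k:ℤ) := by
  rw [Int.emod_eq_emod_iff_emod_sub_eq_zero, Int.emod_eq_emod_iff_emod_sub_eq_zero,
    show v + 1 - (c + 1) = v - c by ring]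

lemma Jcnt_diff (k : ℕ) (c u : ℤ) : ∀ v : ℤ, u - 1 ≤ v →
    (Jcnt k (c+1) u v : ℤ) - (Jcnt k c u v : ℤ)
      = (if (u-1) % (k:ℤ) = c % (k:ℤ) then 1 else 0)
        - (if v % (k:ℤ) = c % (k:ℤ) then 1 else 0) := by
  intro v
  refine Int.le_induction
    (motive := fun w _ => (Jcnt k (c+1) u w : ℤ) - (Jcnt k c u w : ℤ)
      = (if (u-1) % (k:ℤ) = c % (k:ℤ) then 1 else 0)
        - (if w % (k:ℤ) = c % (k:ℤ) then 1 else 0)) ?_ ?_ v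
  · have hempty : Finset.Icc u (u-1) = ∅ := Finset.Icc_eq_empty (by omega)
    show (Jcnt k (c+1) u (u-1) : ℤ) - (Jcnt k c u (u-1) : ℤ) = _
    unfold Jcnt
    rw [hempty]
    simp
  · intro v hv ih
    show (Jcnt k (c+1) u (v+1) : ℤ) - (Jcnt k c u (v+1) : ℤ) = _
    rw [Jcnt_succ k (c+1) u (by omega), Jcnt_succ k c u (by omega)]
    push_cast
    have hmod := mod_succ_iff k v c
    split_ifs at * <;> omega

lemma filter_box_betaSet {P : PartitionSeq} {M : ℕ} (hg : Good P M) :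
    (box M).filter (fun x => x ∈ betaSet P) = (Finset.range M).image (beta P) := by
  classical
  ext x
  simp only [Finset.mem_filter, Finset.mem_image, Finset.mem_range, betaSet, Set.mem_range]
  constructor
  · rintro ⟨hbox, b, rfl⟩
    exact ⟨b, (beta_mem_box_iff hg b).mp hbox, rfl⟩
  · rintro ⟨b, hb, rfl⟩
    exact ⟨(beta_mem_box_iff hg b).mpr hb, b, rfl⟩

lemma colorCount_eq_sum {P : PartitionSeq} {M : ℕ} (hg : Good P M) (k : ℕ) (c : ℤ) :
    P.colorCount k c
      = ∑ a ∈ Finset.range M,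
          ((Finset.Icc (-(a:ℤ)) (beta P a)).filter (fun t => t % (k:ℤ) = c)).card := by
  classical
  have hset : {p ∈ P.cells | ((p.2:ℤ) - (p.1:ℤ)) % (k:ℤ) = c}
      = ↑((Finset.range M ×ˢ Finset.range M).filter
          (fun p : ℕ × ℕ => p.2 < P.f p.1 ∧ ((p.2:ℤ) - (p.1:ℤ)) % (k:ℤ) = c)) := by
    ext ⟨a, b⟩
    simp only [Set.mem_setOf_eq, PartitionSeq.cells, Finset.coe_filter,
      Finset.mem_product, Finset.mem_range]
    constructor
    · rintro ⟨hcell, hcol⟩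
      have haM : a < M := by
        by_contra hcon
        push_neg at hcon
        rw [hg.1 a hcon] at hcell
        omega
      have hbM : b < M := by
        have h1 : P.f a ≤ P.f 0 := P.antitone 0 a (Nat.zero_le a)
        have h2 := hg.2
        omega
      exact ⟨⟨haM, hbM⟩, hcell, hcol⟩
    · rintro ⟨-, hcell, hcol⟩
      exact ⟨hcell, hcol⟩
  rw [PartitionSeq.colorCount, hset, Set.ncard_coe_finset]
  rw [Finset.card_eq_sum_card_fiberwise (f := fun p : ℕ × ℕ => p.1)
    (t := Finset.range M) ?hmem]
  case hmem =>
    rintro ⟨a, b⟩ hp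
    simp only [Finset.mem_coe, Finset.mem_filter, Finset.mem_product, Finset.mem_range] at hp ⊢
    exact hp.1.1
  apply Finset.sum_congr rfl
  intro a ha
  simp only [Finset.mem_range] at ha
  apply Finset.card_bij' (fun (p : ℕ × ℕ) _ => (p.2:ℤ) - (p.1:ℤ))
    (fun (t : ℤ) _ => (a, (t + a).toNat))
  · rintro ⟨a', b⟩ hp
    simp only [Finset.mem_filter, Finset.mem_product, Finset.mem_range] at hp
    obtain ⟨⟨⟨ha', hb⟩, hcell, hcol⟩, heq⟩ := hp
    subst heq
    simp only [Finset.mem_filter, Finset.mem_Icc]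
    refine ⟨⟨by omega, ?_⟩, hcol⟩
    unfold beta
    omega
  · intro t ht
    simp only [Finset.mem_filter, Finset.mem_Icc] at ht
    obtain ⟨⟨ht1, ht2⟩, hcol⟩ := ht
    have hb : beta P a = (P.f a : ℤ) - 1 - a := rfl
    simp only [Finset.mem_filter, Finset.mem_product, Finset.mem_range]
    have htN : ((t + a).toNat : ℤ) = t + a := Int.toNat_of_nonneg (by omega)
    have hcell : (t + a).toNat < P.f a := by omega
    have hbM : (t + a).toNat < M := by
      have h1 : P.f a ≤ P.f 0 := P.antitone 0 a (Nat.zero_le a)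
      have h2 := hg.2
      omega
    refine ⟨⟨⟨ha, hbM⟩, hcell, ?_⟩, trivial⟩
    rw [htN]
    have : t + (a:ℤ) - a = t := by ring
    rw [this]
    exact hcol
  · rintro ⟨a', b⟩ hp
    simp only [Finset.mem_filter] at hp
    obtain ⟨-, heq⟩ := hp
    have : ((b:ℤ) - (a':ℤ) + a).toNat = b := by omega
    simp only [this]
    rw [← heq]
  · intro t ht
    simp only [Finset.mem_filter, Finset.mem_Icc] at ht
    have htN : ((t + a).toNat : ℤ) = t + a := Int.toNat_of_nonneg (by omega)
    simp only []
    omega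

end KQ
namespace KQ

lemma bound_split_mul {k M₁ c : ℕ} (hc : c < k) {S : Set ℤ} (hB : Bound S (k*M₁)) :
    Bound (splitS k c S) M₁ := by
  have hk : (1:ℤ) ≤ k := by exact_mod_cast Nat.one_le_iff_ne_zero.mpr (by omega)
  have hc' : (c:ℤ) < k := by exact_mod_cast hc
  have hc0 : (0:ℤ) ≤ c := by positivity
  have hcast : ((k*M₁ : ℕ) : ℤ) = (k:ℤ)*(M₁:ℤ) := by push_cast; ring
  constructor
  · intro q hq
    apply hB.1
    rw [hcast]
    have : (k:ℤ)*q ≤ k*(-(M₁:ℤ)-1) := mul_le_mul_of_nonneg_left (by omega) (by omega)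
    nlinarith
  · intro q hq
    apply hB.2
    rw [hcast]
    have : (k:ℤ)*(M₁:ℤ) ≤ k*q := mul_le_mul_of_nonneg_left hq (by omega)
    omega

lemma X_count {k M₁ : ℕ} (hk : 1 ≤ k) {c : ℕ} (hc : c < k) :
    ((Finset.Icc (-((k*M₁:ℕ):ℤ)) (-1)).filter
      (fun t => t % (k:ℤ) = (c:ℤ) % (k:ℤ))).card = M₁ := by
  classical
  have hk' : (1:ℤ) ≤ k := by exact_mod_cast hk
  have hc' : (c:ℤ) < k := by exact_mod_cast hc
  have hc0 : (0:ℤ) ≤ c := by positivity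
  have hcc : (c:ℤ) % (k:ℤ) = (c:ℤ) := Int.emod_eq_of_lt hc0 hc'
  have hcast : ((k*M₁ : ℕ) : ℤ) = (k:ℤ)*(M₁:ℤ) := by push_cast; ring
  have hM : (Finset.Icc (-(M₁:ℤ)) (-1)).card = M₁ := by
    rw [Int.card_Icc]; omega
  have key : ((Finset.Icc (-((k*M₁:ℕ):ℤ)) (-1)).filter
      (fun t => t % (k:ℤ) = (c:ℤ) % (k:ℤ))).card = (Finset.Icc (-(M₁:ℤ)) (-1)).card := by
    apply Finset.card_bij' (fun (x : ℤ) _ => x / (k:ℤ)) (fun (q : ℤ) _ => (k:ℤ)*q + (c:ℤ))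
    · intro x hx
      simp only [Finset.mem_filter, Finset.mem_Icc] at hx ⊢
      obtain ⟨⟨hx1, hx2⟩, hx3⟩ := hx
      rw [hcc] at hx3
      have hdec : x = (k:ℤ)*(x/k) + c := by
        have h1 := Int.mul_ediv_add_emod x k
        omega
      rw [hcast] at hx1
      constructor
      · by_contra hcon
        push_neg at hcon
        have : (k:ℤ)*(x/k) ≤ k*(-(M₁:ℤ)-1) := mul_le_mul_of_nonneg_left (by omega) (by omega)
        nlinarith
      · by_contra hcon
        push_neg at hcon
        have : (k:ℤ)*0 ≤ k*(x/k) := mul_le_mul_of_nonneg_left (by omega) (by omega)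
        nlinarith
    · intro q hq
      simp only [Finset.mem_filter, Finset.mem_Icc] at hq ⊢
      obtain ⟨hq1, hq2⟩ := hq
      have h1 : (k:ℤ)*(-(M₁:ℤ)) ≤ k*q := mul_le_mul_of_nonneg_left hq1 (by omega)
      have h2 : (k:ℤ)*q ≤ k*(-1) := mul_le_mul_of_nonneg_left hq2 (by omega)
      refine ⟨⟨by rw [hcast]; nlinarith, by nlinarith⟩, ?_⟩
      rw [add_comm, Int.add_mul_emod_self_left]
    · intro x hx
      simp only [Finset.mem_filter, Finset.mem_Icc] at hx
      obtain ⟨-, hx3⟩ := hx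
      rw [hcc] at hx3
      have h1 := Int.mul_ediv_add_emod x k
      show (k:ℤ)*(x/k) + c = x
      omega
    · intro q hq
      show ((k:ℤ)*q + c) / k = q
      rw [add_comm, Int.add_mul_ediv_left _ q (by omega : (k:ℤ) ≠ 0),
        Int.ediv_eq_zero_of_lt (by positivity) (by exact_mod_cast hc)]
      omega
  rw [key, hM]

lemma cnt_res {k M₁ : ℕ} (hk : 1 ≤ k) {c : ℕ} (hc : c < k) (S : Set ℤ) :
    ((box (k*M₁)).filter (fun x => x ∈ S ∧ x % (k:ℤ) = (c:ℤ) % (k:ℤ))).card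
      = cnt (splitS k c S) (box M₁) := by
  classical
  have hk' : (1:ℤ) ≤ k := by exact_mod_cast hk
  have hc' : (c:ℤ) < k := by exact_mod_cast hc
  have hc0 : (0:ℤ) ≤ c := by positivity
  have hcc : (c:ℤ) % (k:ℤ) = (c:ℤ) := Int.emod_eq_of_lt hc0 hc'
  rw [cnt]
  apply Finset.card_bij' (fun (x : ℤ) _ => x / (k:ℤ)) (fun (q : ℤ) _ => (k:ℤ)*q + (c:ℤ))
  · intro x hx
    simp only [Finset.mem_filter] at hx ⊢
    obtain ⟨hx1, hx2, hx3⟩ := hx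
    rw [hcc] at hx3
    have hdec : x = (k:ℤ)*(x/k) + c := by
      have h1 := Int.mul_ediv_add_emod x k
      omega
    constructor
    · rw [← box_mul_mem hc (x/k), ← hdec]; exact hx1
    · show (k:ℤ)*(x/k) + c ∈ S
      rw [← hdec]; exact hx2
  · intro q hq
    simp only [Finset.mem_filter] at hq ⊢
    refine ⟨(box_mul_mem hc q).mpr hq.1, hq.2, ?_⟩
    rw [add_comm, Int.add_mul_emod_self_left]
  · intro x hx
    simp only [Finset.mem_filter] at hx
    obtain ⟨-, -, hx3⟩ := hx
    rw [hcc] at hx3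
    have h1 := Int.mul_ediv_add_emod x k
    show (k:ℤ)*(x/k) + c = x
    omega
  · intro q hq
    show ((k:ℤ)*q + c) / k = q
    rw [add_comm, Int.add_mul_ediv_left _ q (by omega : (k:ℤ) ≠ 0),
      Int.ediv_eq_zero_of_lt (by positivity) (by exact_mod_cast hc)]
    omega

lemma sum_indicator_neg (M k : ℕ) (c : ℤ) :
    ∑ a ∈ Finset.range M, (if (-(a:ℤ)-1) % (k:ℤ) = c % (k:ℤ) then (1:ℕ) else 0)
      = ((Finset.Icc (-(M:ℤ)) (-1)).filter (fun t => t % (k:ℤ) = c % (k:ℤ))).card := by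
  classical
  rw [← Finset.card_filter]
  apply Finset.card_bij' (fun (a : ℕ) _ => -(a:ℤ)-1) (fun (t : ℤ) _ => (-1-t).toNat)
  · intro a ha
    simp only [Finset.mem_filter, Finset.mem_range, Finset.mem_Icc] at ha ⊢
    exact ⟨⟨by omega, by omega⟩, ha.2⟩
  · intro t ht
    simp only [Finset.mem_filter, Finset.mem_range, Finset.mem_Icc] at ht ⊢
    obtain ⟨⟨ht1, ht2⟩, ht3⟩ := ht
    have htN : ((-1-t).toNat : ℤ) = -1-t := Int.toNat_of_nonneg (by omega)
    refine ⟨by omega, ?_⟩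
    rw [show -(((-1-t).toNat : ℕ) : ℤ) - 1 = t by omega]
    exact ht3
  · intro a ha
    show (-1 - (-(a:ℤ)-1)).toNat = a
    omega
  · intro t ht
    simp only [Finset.mem_filter, Finset.mem_Icc] at ht
    have htN : ((-1-t).toNat : ℤ) = -1-t := Int.toNat_of_nonneg (by omega)
    omega

lemma sum_indicator_beta {P : PartitionSeq} {M : ℕ} (hg : Good P M) (k : ℕ) (c : ℤ) :
    ∑ a ∈ Finset.range M, (if (beta P a) % (k:ℤ) = c % (k:ℤ) then (1:ℕ) else 0)
      = ((box M).filter (fun x => x ∈ betaSet P ∧ x % (k:ℤ) = c % (k:ℤ))).card := by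
  classical
  rw [← Finset.card_filter]
  have h1 : (box M).filter (fun x => x ∈ betaSet P ∧ x % (k:ℤ) = c % (k:ℤ))
      = ((box M).filter (fun x => x ∈ betaSet P)).filter (fun x => x % (k:ℤ) = c % (k:ℤ)) := by
    rw [Finset.filter_filter]
  rw [h1, filter_box_betaSet hg, Finset.filter_image,
    Finset.card_image_of_injective _ (beta_inj P)]

end KQ
namespace KQ

lemma color_diff {k M₁ : ℕ} (hk : 1 ≤ k) {P : PartitionSeq} (hg : Good P (k*M₁))
    {c : ℕ} (hc : c < k) :
    (P.colorCount k ((((c+1) % k : ℕ)) : ℤ) : ℤ) - (P.colorCount k ((c : ℕ) : ℤ) : ℤ)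
      = (M₁:ℤ) - (cnt (splitS k c (betaSet P)) (box M₁) : ℤ) := by
  classical
  have hk' : (1:ℤ) ≤ k := by exact_mod_cast hk
  have hc' : (c:ℤ) < k := by exact_mod_cast hc
  have hc0 : (0:ℤ) ≤ c := by positivity
  have hcc : (c:ℤ) % (k:ℤ) = (c:ℤ) := Int.emod_eq_of_lt hc0 hc'
  have e1 : ((((c+1) % k : ℕ)) : ℤ) = ((c:ℤ)+1) % (k:ℤ) := by push_cast; ring_nf
  set M := k * M₁ with hM
  rw [colorCount_eq_sum hg k, colorCount_eq_sum hg k]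
  have h1 : ∀ a : ℕ,
      ((Finset.Icc (-(a:ℤ)) (beta P a)).filter
        (fun t => t % (k:ℤ) = ((((c+1) % k : ℕ)) : ℤ))).card
      = Jcnt k ((c:ℤ)+1) (-(a:ℤ)) (beta P a) := by
    intro a
    unfold Jcnt
    congr 1
  have h2 : ∀ a : ℕ,
      ((Finset.Icc (-(a:ℤ)) (beta P a)).filter
        (fun t => t % (k:ℤ) = ((c : ℕ) : ℤ))).card
      = Jcnt k (c:ℤ) (-(a:ℤ)) (beta P a) := by
    intro a
    unfold Jcnt
    congr 1
    apply Finset.filter_congr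
    intro t _
    rw [hcc]
  rw [Finset.sum_congr rfl (fun a _ => h1 a), Finset.sum_congr rfl (fun a _ => h2 a)]
  push_cast
  rw [← Finset.sum_sub_distrib]
  have h3 : ∀ a ∈ Finset.range M,
      (Jcnt k ((c:ℤ)+1) (-(a:ℤ)) (beta P a) : ℤ) - (Jcnt k (c:ℤ) (-(a:ℤ)) (beta P a) : ℤ)
        = (if (-(a:ℤ)-1) % (k:ℤ) = (c:ℤ) % (k:ℤ) then (1:ℤ) else 0)
          - (if (beta P a) % (k:ℤ) = (c:ℤ) % (k:ℤ) then (1:ℤ) else 0) := by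
    intro a _
    have := Jcnt_diff k (c:ℤ) (-(a:ℤ)) (beta P a) (by unfold beta; omega)
    rw [show -(a:ℤ) - 1 = -(a:ℤ)-1 by ring] at this
    exact this
  rw [Finset.sum_congr rfl h3, Finset.sum_sub_distrib]
  have h4 : ∑ a ∈ Finset.range M, (if (-(a:ℤ)-1) % (k:ℤ) = (c:ℤ) % (k:ℤ) then (1:ℤ) else 0)
      = ((M₁ : ℕ) : ℤ) := by
    have := sum_indicator_neg M k (c:ℤ)
    have hcast : ∑ a ∈ Finset.range M, (if (-(a:ℤ)-1) % (k:ℤ) = (c:ℤ) % (k:ℤ) then (1:ℤ) else 0)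
        = ((∑ a ∈ Finset.range M, (if (-(a:ℤ)-1) % (k:ℤ) = (c:ℤ) % (k:ℤ) then (1:ℕ) else 0) : ℕ) : ℤ) := by
      push_cast
      apply Finset.sum_congr rfl
      intro a _
      split_ifs <;> simp
    rw [hcast, this]
    rw [X_count hk hc]
  have h5 : ∑ a ∈ Finset.range M, (if (beta P a) % (k:ℤ) = (c:ℤ) % (k:ℤ) then (1:ℤ) else 0)
      = (cnt (splitS k c (betaSet P)) (box M₁) : ℤ) := by
    have := sum_indicator_beta hg k (c:ℤ)
    have hcast : ∑ a ∈ Finset.range M, (if (beta P a) % (k:ℤ) = (c:ℤ) % (k:ℤ) then (1:ℤ) else 0)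
        = ((∑ a ∈ Finset.range M, (if (beta P a) % (k:ℤ) = (c:ℤ) % (k:ℤ) then (1:ℕ) else 0) : ℕ) : ℤ) := by
      push_cast
      apply Finset.sum_congr rfl
      intro a _
      split_ifs <;> simp
    rw [hcast, this, ← cnt_res hk hc (betaSet P)]
  rw [h4, h5]

lemma kregular_iff {k : ℕ} (hk : 1 ≤ k) {P : PartitionSeq} {M₁ : ℕ} (hg : Good P (k*M₁)) :
    P.KRegular k ↔ ∀ c : ℕ, c < k → Charge0 (splitS k c (betaSet P)) := by
  have hbound : Bound (betaSet P) (k*M₁) := bound_betaSet hg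
  have hbsplit : ∀ c : ℕ, c < k → Bound (splitS k c (betaSet P)) M₁ :=
    fun c hc => bound_split_mul hc hbound
  have hchS : Charge0 (betaSet P) := charge0_betaSet hg
  constructor
  · intro hreg c hc
    have h1 := color_diff hk hg hc
    have h2 : P.colorCount k ((((c+1) % k : ℕ)) : ℤ) = P.colorCount k ((c : ℕ) : ℤ) := by
      apply hreg
      · simp only [Finset.mem_range]
        exact Nat.mod_lt _ (by omega)
      · simp only [Finset.mem_range]; exact hc
    rw [h2] at h1
    refine ⟨M₁, hbsplit c hc, ?_⟩
    omega
  · intro hall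
    have key : ∀ c : ℕ, c < k → P.colorCount k ((c:ℕ) : ℤ) = P.colorCount k ((0:ℕ) : ℤ) := by
      intro c
      induction c with
      | zero => intro _; rfl
      | succ c ih =>
          intro hc1
          have hck : c < k := by omega
          have h1 := color_diff hk hg hck
          have h2 : cnt (splitS k c (betaSet P)) (box M₁) = M₁ :=
            (hall c hck).cnt_box (hbsplit c hck)
          rw [h2] at h1
          have h3 : (c+1) % k = c+1 := Nat.mod_eq_of_lt hc1
          rw [h3] at h1
          have h4 := ih hck
          omega
    intro c₁ h₁ c₂ h₂
    simp only [Finset.mem_range] at h₁ h₂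
    rw [key c₁ h₁, key c₂ h₂]

end KQ
namespace KQ

noncomputable def indI (U : Set ℤ) (a : ℤ) : ℤ := if a ∈ U then 1 else 0

lemma indI_cases (U : Set ℤ) (a : ℤ) : indI U a = 0 ∨ indI U a = 1 := by
  unfold indI; split_ifs <;> simp

lemma sum_indI {U : Set ℤ} {M : ℕ} :
    ∑ a ∈ box M, indI U a = (cnt U (box M) : ℤ) := by
  classical
  rw [cnt, Finset.card_filter]
  push_cast
  apply Finset.sum_congr rfl
  intro a _
  unfold indI
  split_ifs <;> simp

lemma card_pairs_eq_sum (U V : Set ℤ) (M : ℕ) (R : ℤ → ℤ → Prop) [DecidableRel R] :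
    ((((box M ×ˢ box M).filter (fun p => p.1 ∈ U ∧ p.2 ∉ V ∧ R p.1 p.2)).card) : ℤ)
      = ∑ p ∈ (box M ×ˢ box M).filter (fun p => R p.1 p.2),
          indI U p.1 * (1 - indI V p.2) := by
  classical
  have h1 : (box M ×ˢ box M).filter (fun p => p.1 ∈ U ∧ p.2 ∉ V ∧ R p.1 p.2)
      = ((box M ×ˢ box M).filter (fun p => R p.1 p.2)).filter
          (fun p => p.1 ∈ U ∧ p.2 ∉ V) := by
    rw [Finset.filter_filter]
    apply Finset.filter_congr
    intro p _
    tauto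
  rw [h1, Finset.card_filter]
  push_cast
  apply Finset.sum_congr rfl
  intro p _
  unfold indI
  split_ifs <;> simp_all

lemma sum_lt_ww {M : ℕ} (w : ℤ → ℤ) (h0 : ∑ a ∈ box M, w a = 0) :
    2 * (∑ p ∈ (box M ×ˢ box M).filter (fun p => p.2 < p.1), w p.1 * w p.2)
      = - ∑ a ∈ box M, (w a)^2 := by
  classical
  have htotal : ∑ p ∈ box M ×ˢ box M, w p.1 * w p.2 = 0 := by
    rw [Finset.sum_product, ← Finset.sum_mul_sum, h0, zero_mul]
  have hsplit1 := Finset.sum_filter_add_sum_filter_not (box M ×ˢ box M)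
    (fun p : ℤ × ℤ => p.2 < p.1) (fun p => w p.1 * w p.2)
  have hsplit2 := Finset.sum_filter_add_sum_filter_not
    ((box M ×ˢ box M).filter (fun p : ℤ × ℤ => ¬ p.2 < p.1))
    (fun p : ℤ × ℤ => p.1 < p.2) (fun p => w p.1 * w p.2)
  have he1 : ((box M ×ˢ box M).filter (fun p : ℤ × ℤ => ¬ p.2 < p.1)).filter
      (fun p : ℤ × ℤ => p.1 < p.2) = (box M ×ˢ box M).filter (fun p : ℤ × ℤ => p.1 < p.2) := by
    rw [Finset.filter_filter]
    apply Finset.filter_congr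
    intro p _
    constructor
    · rintro ⟨-, h⟩; exact h
    · intro h; exact ⟨by omega, h⟩
  have he2 : ((box M ×ˢ box M).filter (fun p : ℤ × ℤ => ¬ p.2 < p.1)).filter
      (fun p : ℤ × ℤ => ¬ p.1 < p.2) = (box M ×ˢ box M).filter (fun p : ℤ × ℤ => p.2 = p.1) := by
    rw [Finset.filter_filter]
    apply Finset.filter_congr
    intro p _
    constructor
    · rintro ⟨h1, h2⟩; omega
    · intro h; omega
  rw [he1, he2] at hsplit2
  have hswap : ∑ p ∈ (box M ×ˢ box M).filter (fun p : ℤ × ℤ => p.1 < p.2), w p.1 * w p.2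
      = ∑ p ∈ (box M ×ˢ box M).filter (fun p : ℤ × ℤ => p.2 < p.1), w p.1 * w p.2 := by
    apply Finset.sum_bij' (fun (p : ℤ × ℤ) _ => (p.2, p.1)) (fun (p : ℤ × ℤ) _ => (p.2, p.1))
    · intro p hp
      simp only [Finset.mem_filter, Finset.mem_product] at hp ⊢
      exact ⟨⟨hp.1.2, hp.1.1⟩, hp.2⟩
    · intro p hp
      simp only [Finset.mem_filter, Finset.mem_product] at hp ⊢
      exact ⟨⟨hp.1.2, hp.1.1⟩, hp.2⟩
    · intro p hp; rfl
    · intro p hp; rfl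
    · intro p hp; exact mul_comm _ _
  have hdiag : ∑ p ∈ (box M ×ˢ box M).filter (fun p : ℤ × ℤ => p.2 = p.1), w p.1 * w p.2
      = ∑ a ∈ box M, (w a)^2 := by
    apply Finset.sum_bij' (fun (p : ℤ × ℤ) _ => p.1) (fun (a : ℤ) _ => (a, a))
    · intro p hp
      simp only [Finset.mem_filter, Finset.mem_product] at hp
      exact hp.1.1
    · intro a ha
      simp only [Finset.mem_filter, Finset.mem_product]
      exact ⟨⟨ha, ha⟩, trivial⟩
    · intro p hp
      simp only [Finset.mem_filter] at hp
      have := hp.2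
      ext <;> simp [this]
    · intro a ha; rfl
    · intro p hp
      simp only [Finset.mem_filter] at hp
      rw [hp.2]
      ring
  rw [hswap, hdiag] at hsplit2
  rw [← hsplit2] at hsplit1
  rw [htotal] at hsplit1
  linarith

lemma w_sq (U V : Set ℤ) (a : ℤ) :
    (indI U a - indI V a)^2 = indI U a * (1 - indI V a) + indI V a * (1 - indI U a) := by
  unfold indI
  split_ifs <;> ring

/-- pair count with `≤` -/
noncomputable def Cle (U V : Set ℤ) (M : ℕ) : ℕ :=
  ((box M ×ˢ box M).filter (fun p => p.1 ∈ U ∧ p.2 ∉ V ∧ p.2 ≤ p.1)).card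

/-- pair count with `<` -/
noncomputable def Clt (U V : Set ℤ) (M : ℕ) : ℕ :=
  ((box M ×ˢ box M).filter (fun p => p.1 ∈ U ∧ p.2 ∉ V ∧ p.2 < p.1)).card

lemma PC_eq_Clt (U : Set ℤ) (M : ℕ) : PC U M = Clt U U M := rfl

lemma cross_id {U V : Set ℤ} {M : ℕ} (h : cnt U (box M) = cnt V (box M)) :
    (Cle U V M : ℤ) + (Clt V U M : ℤ) = (Clt U U M : ℤ) + (Clt V V M : ℤ) := by
  classical
  set T := box M ×ˢ box M with hT
  set Plt := T.filter (fun p : ℤ × ℤ => p.2 < p.1) with hPlt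
  set u := indI U with hu
  set v := indI V with hv
  set w : ℤ → ℤ := fun a => u a - v a with hw
  have hw0 : ∑ a ∈ box M, w a = 0 := by
    simp only [hw]
    rw [Finset.sum_sub_distrib, sum_indI, sum_indI, h]
    ring
  have hww := sum_lt_ww w hw0
  -- decompose Cle
  have hle : (Cle U V M : ℤ)
      = (Clt U V M : ℤ) + ∑ a ∈ box M, u a * (1 - v a) := by
    unfold Cle Clt
    have hsplit : (T.filter (fun p : ℤ × ℤ => p.1 ∈ U ∧ p.2 ∉ V ∧ p.2 ≤ p.1)).card
        = (T.filter (fun p : ℤ × ℤ => p.1 ∈ U ∧ p.2 ∉ V ∧ p.2 < p.1)).card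
          + (T.filter (fun p : ℤ × ℤ => p.1 ∈ U ∧ p.2 ∉ V ∧ p.2 = p.1)).card := by
      rw [← Finset.card_union_of_disjoint]
      · congr 1
        ext p
        simp only [Finset.mem_union, Finset.mem_filter]
        constructor
        · rintro ⟨hp, h1, h2, h3⟩
          rcases eq_or_lt_of_le h3 with h4 | h4
          · exact Or.inr ⟨hp, h1, h2, h4⟩
          · exact Or.inl ⟨hp, h1, h2, h4⟩
        · rintro (⟨hp, h1, h2, h3⟩ | ⟨hp, h1, h2, h3⟩)
          · exact ⟨hp, h1, h2, by omega⟩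
          · exact ⟨hp, h1, h2, by omega⟩
      · rw [Finset.disjoint_left]
        rintro p h1 h2
        simp only [Finset.mem_filter] at h1 h2
        omega
    rw [hsplit]
    push_cast
    congr 1
    -- diagonal part
    have hdiag2 : ((T.filter (fun p : ℤ × ℤ => p.1 ∈ U ∧ p.2 ∉ V ∧ p.2 = p.1)).card : ℤ)
        = ∑ a ∈ box M, u a * (1 - v a) := by
      rw [card_pairs_eq_sum U V M (fun x y => y = x)]
      apply Finset.sum_bij' (fun (p : ℤ × ℤ) _ => p.1) (fun (a : ℤ) _ => (a, a))
      · intro p hp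
        simp only [Finset.mem_filter, Finset.mem_product] at hp
        exact hp.1.1
      · intro a ha
        simp only [Finset.mem_filter, Finset.mem_product]
        exact ⟨⟨ha, ha⟩, trivial⟩
      · intro p hp
        simp only [Finset.mem_filter] at hp
        have := hp.2
        ext <;> simp [this]
      · intro a ha; rfl
      · intro p hp
        simp only [Finset.mem_filter] at hp
        rw [hp.2]
    exact hdiag2
  -- express everything as sums over Plt
  have e1 : (Clt U V M : ℤ) = ∑ p ∈ Plt, u p.1 * (1 - v p.2) :=
    card_pairs_eq_sum U V M (fun x y => y < x)
  have e2 : (Clt V U M : ℤ) = ∑ p ∈ Plt, v p.1 * (1 - u p.2) :=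
    card_pairs_eq_sum V U M (fun x y => y < x)
  have e3 : (Clt U U M : ℤ) = ∑ p ∈ Plt, u p.1 * (1 - u p.2) :=
    card_pairs_eq_sum U U M (fun x y => y < x)
  have e4 : (Clt V V M : ℤ) = ∑ p ∈ Plt, v p.1 * (1 - v p.2) :=
    card_pairs_eq_sum V V M (fun x y => y < x)
  have hkey : ∑ p ∈ Plt, (u p.1 * (1 - v p.2) + v p.1 * (1 - u p.2)
      - u p.1 * (1 - u p.2) - v p.1 * (1 - v p.2)) = ∑ p ∈ Plt, w p.1 * w p.2 := by
    apply Finset.sum_congr rfl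
    intro p _
    simp only [hw]
    ring
  have hsum_w_sq : ∑ a ∈ box M, (w a)^2
      = ∑ a ∈ box M, u a * (1 - v a) + ∑ a ∈ box M, v a * (1 - u a) := by
    rw [← Finset.sum_add_distrib]
    apply Finset.sum_congr rfl
    intro a _
    exact w_sq U V a
  have hbal : ∑ a ∈ box M, u a * (1 - v a) = ∑ a ∈ box M, v a * (1 - u a) := by
    have : ∑ a ∈ box M, (u a * (1 - v a) - v a * (1 - u a)) = 0 := by
      have : ∀ a, u a * (1 - v a) - v a * (1 - u a) = w a := by
        intro a; simp only [hw]; ring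
      rw [Finset.sum_congr rfl (fun a _ => this a), hw0]
    have h2 := Finset.sum_sub_distrib (s := box M)
      (f := fun a => u a * (1 - v a)) (g := fun a => v a * (1 - u a))
    omega
  -- combine
  rw [hle, e1, e2, e3, e4]
  have hPltsum : ∑ p ∈ Plt, u p.1 * (1 - v p.2) + ∑ p ∈ Plt, v p.1 * (1 - u p.2)
      - ∑ p ∈ Plt, u p.1 * (1 - u p.2) - ∑ p ∈ Plt, v p.1 * (1 - v p.2)
      = ∑ p ∈ Plt, w p.1 * w p.2 := by
    rw [← hkey]
    rw [← Finset.sum_add_distrib, ← Finset.sum_sub_distrib, ← Finset.sum_sub_distrib]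
  have hfinal : 2 * (∑ p ∈ Plt, w p.1 * w p.2) = - ∑ a ∈ box M, (w a)^2 := hww
  have h2sum : ∑ a ∈ box M, (w a)^2 = 2 * ∑ a ∈ box M, u a * (1 - v a) := by
    rw [hsum_w_sq, ← hbal]; ring
  linarith

end KQ
namespace KQ

noncomputable def Dij (k : ℕ) (S : Set ℤ) (M₁ i j : ℕ) : ℕ :=
  ((box M₁ ×ˢ box M₁).filter (fun p =>
    p.1 ∈ splitS k i S ∧ p.2 ∉ splitS k j S ∧ (p.2 < p.1 ∨ (p.2 = p.1 ∧ j < i)))).card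

lemma D_diag (k : ℕ) (S : Set ℤ) (M₁ i : ℕ) : Dij k S M₁ i i = PC (splitS k i S) M₁ := by
  classical
  unfold Dij PC
  congr 1
  apply Finset.filter_congr
  intro p _
  constructor
  · rintro ⟨h1, h2, (h3 | ⟨h3, h4⟩)⟩
    · exact ⟨h1, h2, h3⟩
    · omega
  · rintro ⟨h1, h2, h3⟩
    exact ⟨h1, h2, Or.inl h3⟩

lemma D_lt (k : ℕ) (S : Set ℤ) (M₁ : ℕ) {i j : ℕ} (hij : j < i) :
    Dij k S M₁ i j = Cle (splitS k i S) (splitS k j S) M₁ := by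
  classical
  unfold Dij Cle
  congr 1
  apply Finset.filter_congr
  intro p _
  constructor
  · rintro ⟨h1, h2, (h3 | ⟨h3, h4⟩)⟩
    · exact ⟨h1, h2, by omega⟩
    · exact ⟨h1, h2, by omega⟩
  · rintro ⟨h1, h2, h3⟩
    rcases eq_or_lt_of_le h3 with h4 | h4
    · exact ⟨h1, h2, Or.inr ⟨h4, hij⟩⟩
    · exact ⟨h1, h2, Or.inl h4⟩

lemma D_gt (k : ℕ) (S : Set ℤ) (M₁ : ℕ) {i j : ℕ} (hij : i < j) :
    Dij k S M₁ i j = Clt (splitS k i S) (splitS k j S) M₁ := by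
  classical
  unfold Dij Clt
  congr 1
  apply Finset.filter_congr
  intro p _
  constructor
  · rintro ⟨h1, h2, (h3 | ⟨h3, h4⟩)⟩
    · exact ⟨h1, h2, h3⟩
    · omega
  · rintro ⟨h1, h2, h3⟩
    exact ⟨h1, h2, Or.inl h3⟩

lemma D_add {k M₁ : ℕ} (hk : 1 ≤ k) {S : Set ℤ} (hBS : Bound S (k*M₁))
    (hall : ∀ c : ℕ, c < k → Charge0 (splitS k c S))
    {i j : ℕ} (hi : i < k) (hj : j < k) :
    Dij k S M₁ i j + Dij k S M₁ j i
      = PC (splitS k i S) M₁ + PC (splitS k j S) M₁ := by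
  have hcnt : ∀ c : ℕ, c < k → cnt (splitS k c S) (box M₁) = M₁ :=
    fun c hc => (hall c hc).cnt_box (bound_split_mul hc hBS)
  rcases lt_trichotomy i j with hij | hij | hij
  · rw [D_gt k S M₁ hij, D_lt k S M₁ hij]
    have := cross_id (U := splitS k j S) (V := splitS k i S)
      (M := M₁) (by rw [hcnt i hi, hcnt j hj])
    rw [PC_eq_Clt, PC_eq_Clt]
    omega
  · subst hij
    rw [D_diag]
  · rw [D_lt k S M₁ hij, D_gt k S M₁ hij]
    have := cross_id (U := splitS k i S) (V := splitS k j S)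
      (M := M₁) (by rw [hcnt i hi, hcnt j hj])
    rw [PC_eq_Clt, PC_eq_Clt]
    omega

lemma PC_eq_sum_D {k M₁ : ℕ} (hk : 1 ≤ k) (S : Set ℤ) :
    PC S (k*M₁) = ∑ i ∈ Finset.range k, ∑ j ∈ Finset.range k, Dij k S M₁ i j := by
  classical
  have hk' : (0:ℤ) < k := by exact_mod_cast hk
  unfold PC
  rw [Finset.card_eq_sum_card_fiberwise
    (f := fun p : ℤ × ℤ => (((p.1 % k).toNat, (p.2 % k).toNat) : ℕ × ℕ))
    (t := Finset.range k ×ˢ Finset.range k) ?hmem]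
  case hmem =>
    intro p _
    simp only [Finset.mem_coe, Finset.mem_product, Finset.mem_range]
    have h1 := Int.emod_lt_of_pos p.1 hk'
    have h2 := Int.emod_nonneg p.1 (by omega : (k:ℤ) ≠ 0)
    have h3 := Int.emod_lt_of_pos p.2 hk'
    have h4 := Int.emod_nonneg p.2 (by omega : (k:ℤ) ≠ 0)
    omega
  rw [Finset.sum_product]
  apply Finset.sum_congr rfl
  intro i hi
  apply Finset.sum_congr rfl
  intro j hj
  simp only [Finset.mem_range] at hi hj
  unfold Dij
  apply Finset.card_bij'
    (fun (p : ℤ × ℤ) _ => (p.1 / (k:ℤ), p.2 / (k:ℤ)))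
    (fun (q : ℤ × ℤ) _ => ((k:ℤ)*q.1 + i, (k:ℤ)*q.2 + j))
  · rintro ⟨x, y⟩ hp
    simp only [Finset.mem_filter, Finset.mem_product, Prod.mk.injEq] at hp ⊢
    obtain ⟨⟨⟨hx, hy⟩, hxS, hyS, hlt⟩, hres1, hres2⟩ := hp
    have hx2 := Int.emod_nonneg x (by omega : (k:ℤ) ≠ 0)
    have hy2 := Int.emod_nonneg y (by omega : (k:ℤ) ≠ 0)
    have hxd : x = (k:ℤ)*(x/k) + i := by
      have := Int.mul_ediv_add_emod x k
      omega
    have hyd : y = (k:ℤ)*(y/k) + j := by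
      have := Int.mul_ediv_add_emod y k
      omega
    refine ⟨⟨?_, ?_⟩, ?_, ?_, ?_⟩
    · rw [← box_mul_mem hi (x/k), ← hxd]; exact hx
    · rw [← box_mul_mem hj (y/k), ← hyd]; exact hy
    · show (k:ℤ)*(x/k) + i ∈ S
      rw [← hxd]; exact hxS
    · show (k:ℤ)*(y/k) + j ∉ S
      rw [← hyd]; exact hyS
    · rw [← kmul_lt_iff hi hj, ← hxd, ← hyd]
      exact hlt
  · rintro ⟨a, b⟩ hq
    simp only [Finset.mem_filter, Finset.mem_product, Prod.mk.injEq] at hq ⊢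
    obtain ⟨⟨ha, hb⟩, haS, hbS, hord⟩ := hq
    have hres1 : ((k:ℤ)*a + i) % k = i := by
      rw [add_comm, Int.add_mul_emod_self_left]
      exact Int.emod_eq_of_lt (by positivity) (by exact_mod_cast hi)
    have hres2 : ((k:ℤ)*b + j) % k = j := by
      rw [add_comm, Int.add_mul_emod_self_left]
      exact Int.emod_eq_of_lt (by positivity) (by exact_mod_cast hj)
    refine ⟨⟨⟨(box_mul_mem hi a).mpr ha, (box_mul_mem hj b).mpr hb⟩, haS, hbS, ?_⟩, ?_, ?_⟩
    · rw [kmul_lt_iff hi hj]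
      exact hord
    · rw [hres1]; omega
    · rw [hres2]; omega
  · rintro ⟨x, y⟩ hp
    simp only [Finset.mem_filter, Prod.mk.injEq] at hp
    obtain ⟨-, hres1, hres2⟩ := hp
    have hx2 := Int.emod_nonneg x (by omega : (k:ℤ) ≠ 0)
    have hy2 := Int.emod_nonneg y (by omega : (k:ℤ) ≠ 0)
    have hdx := Int.mul_ediv_add_emod x k
    have hdy := Int.mul_ediv_add_emod y k
    show ((k:ℤ)*(x/k) + i, (k:ℤ)*(y/k) + j) = (x, y)
    have : (k:ℤ)*(x/k) + i = x := by omega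
    have : (k:ℤ)*(y/k) + j = y := by omega
    simp_all
  · rintro ⟨a, b⟩ hq
    show (((k:ℤ)*a + i) / k, ((k:ℤ)*b + j) / k) = (a, b)
    have h1 : ((k:ℤ)*a + i) / k = a := by
      rw [add_comm, Int.add_mul_ediv_left _ a (by omega : (k:ℤ) ≠ 0),
        Int.ediv_eq_zero_of_lt (by positivity) (by exact_mod_cast hi)]
      omega
    have h2 : ((k:ℤ)*b + j) / k = b := by
      rw [add_comm, Int.add_mul_ediv_left _ b (by omega : (k:ℤ) ≠ 0),
        Int.ediv_eq_zero_of_lt (by positivity) (by exact_mod_cast hj)]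
      omega
    rw [h1, h2]

lemma PC_box_mul {k M₁ : ℕ} (hk : 1 ≤ k) {S : Set ℤ} (hBS : Bound S (k*M₁))
    (hall : ∀ c : ℕ, c < k → Charge0 (splitS k c S)) :
    PC S (k*M₁) = k * ∑ i ∈ Finset.range k, PC (splitS k i S) M₁ := by
  have h2 : 2 * PC S (k*M₁)
      = ∑ i ∈ Finset.range k, ∑ j ∈ Finset.range k, (Dij k S M₁ i j + Dij k S M₁ j i) := by
    rw [PC_eq_sum_D hk S]
    have hcomm : ∑ i ∈ Finset.range k, ∑ j ∈ Finset.range k, Dij k S M₁ j i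
        = ∑ i ∈ Finset.range k, ∑ j ∈ Finset.range k, Dij k S M₁ i j :=
      Finset.sum_comm
    simp only [Finset.sum_add_distrib]
    omega
  have h3 : ∑ i ∈ Finset.range k, ∑ j ∈ Finset.range k, (Dij k S M₁ i j + Dij k S M₁ j i)
      = ∑ i ∈ Finset.range k, ∑ j ∈ Finset.range k,
          (PC (splitS k i S) M₁ + PC (splitS k j S) M₁) := by
    apply Finset.sum_congr rfl
    intro i hi
    apply Finset.sum_congr rfl
    intro j hj
    simp only [Finset.mem_range] at hi hj
    exact D_add hk hBS hall hi hj
  have h4 : ∑ i ∈ Finset.range k, ∑ j ∈ Finset.range k,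
        (PC (splitS k i S) M₁ + PC (splitS k j S) M₁)
      = 2 * (k * ∑ i ∈ Finset.range k, PC (splitS k i S) M₁) := by
    simp only [Finset.sum_add_distrib, Finset.sum_const, Finset.card_range, smul_eq_mul]
    rw [← Finset.mul_sum]
    ring
  omega

end KQ
namespace KQ

lemma toPart_congr {S S' : Set ℤ} (h : S = S') (hc : Charge0 S) (hc' : Charge0 S') :
    toPart S hc = toPart S' hc' := by subst h; rfl

lemma size_toPart {S : Set ℤ} (hc : Charge0 S) {M : ℕ} (hB : Bound S M) :
    (toPart S hc).size = PC S M := by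
  obtain ⟨M', hg'⟩ := good_exists (toPart S hc)
  have h1 := size_eq_PC hg'
  have h2 : Bound (betaSet (toPart S hc)) M' := bound_betaSet hg'
  rw [betaSet_toPart] at h1 h2
  rw [h1]
  exact PC_eq h2 hB

lemma joinS_congr (k : ℕ) {T T' : ℕ → Set ℤ} (h : ∀ i, i < k → T i = T' i) :
    joinS k T = joinS k T' := by
  ext x
  simp only [joinS, Set.mem_setOf_eq]
  constructor
  · rintro ⟨i, hi, q, rfl, hq⟩
    exact ⟨i, hi, q, rfl, by rwa [← h i hi]⟩
  · rintro ⟨i, hi, q, rfl, hq⟩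
    exact ⟨i, hi, q, rfl, by rwa [h i hi]⟩

noncomputable def goodBnd (P : PartitionSeq) : ℕ := Classical.choose (good_exists P)

lemma goodBnd_spec (P : PartitionSeq) : Good P (goodBnd P) :=
  Classical.choose_spec (good_exists P)

section main

variable {k : ℕ}

lemma good_mul (hk : 1 ≤ k) (P : PartitionSeq) : Good P (k * goodBnd P) :=
  (goodBnd_spec P).mono (Nat.le_mul_of_pos_left _ hk)

/-- the `k`-quotient tuple of a `k`-regular partition -/
noncomputable def fwd (hk : 1 ≤ k) (P : PartitionSeq) (hreg : P.KRegular k) : Fin k → PartitionSeq :=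
  fun i => toPart (splitS k i (betaSet P))
    ((kregular_iff hk (good_mul hk P)).mp hreg i i.isLt)

/-- the component beta sets of a tuple of partitions -/
noncomputable def Tfun (hk : 1 ≤ k) (μ : Fin k → PartitionSeq) : ℕ → Set ℤ :=
  fun i => betaSet (μ ⟨i % k, Nat.mod_lt _ hk⟩)

lemma Tfun_lt (hk : 1 ≤ k) (μ : Fin k → PartitionSeq) {i : ℕ} (hi : i < k) :
    Tfun hk μ i = betaSet (μ ⟨i, hi⟩) := by
  unfold Tfun
  have h : (⟨i % k, Nat.mod_lt _ hk⟩ : Fin k) = ⟨i, hi⟩ := Fin.ext (Nat.mod_eq_of_lt hi)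
  rw [h]

lemma exists_unif_good (μ : Fin k → PartitionSeq) : ∃ M, ∀ i : Fin k, Good (μ i) M := by
  choose g hg using fun i : Fin k => good_exists (μ i)
  refine ⟨Finset.univ.sup g, fun i => (hg i).mono ?_⟩
  exact Finset.le_sup (Finset.mem_univ i)

noncomputable def unifM (μ : Fin k → PartitionSeq) : ℕ :=
  Classical.choose (exists_unif_good (k := k) μ)

lemma unifM_spec (μ : Fin k → PartitionSeq) (i : Fin k) : Good (μ i) (unifM μ) :=
  Classical.choose_spec (exists_unif_good (k := k) μ) i

lemma Tfun_bound (hk : 1 ≤ k) (μ : Fin k → PartitionSeq) {M : ℕ} (hM : unifM μ ≤ M) :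
    ∀ i, i < k → Bound (Tfun hk μ i) M := by
  intro i hi
  rw [Tfun_lt hk μ hi]
  exact bound_betaSet ((unifM_spec μ _).mono hM)

lemma Tfun_charge0 (hk : 1 ≤ k) (μ : Fin k → PartitionSeq) :
    ∀ i, i < k → Charge0 (Tfun hk μ i) := by
  intro i hi
  rw [Tfun_lt hk μ hi]
  exact charge0_betaSet (unifM_spec μ _)

/-- inverse of the `k`-quotient -/
noncomputable def bwd (hk : 1 ≤ k) (μ : Fin k → PartitionSeq) : PartitionSeq :=
  toPart (joinS k (Tfun hk μ))
    (charge0_joinS hk (Tfun_bound hk μ le_rfl) (Tfun_charge0 hk μ))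

lemma bwd_fwd (hk : 1 ≤ k) (P : PartitionSeq) (hreg : P.KRegular k) :
    bwd hk (fwd hk P hreg) = P := by
  unfold bwd
  have h2 : ∀ i, i < k → Tfun hk (fwd hk P hreg) i = splitS k i (betaSet P) := by
    intro i hi
    rw [Tfun_lt hk _ hi]
    exact betaSet_toPart _ _
  have h1 : joinS k (Tfun hk (fwd hk P hreg)) = betaSet P := by
    rw [joinS_congr k h2]
    exact join_split hk (betaSet P)
  exact (toPart_congr h1 _ (charge0_betaSet (goodBnd_spec P))).trans (toPart_betaSet P _)

lemma fwd_bwd (hk : 1 ≤ k) (μ : Fin k → PartitionSeq) (hreg : (bwd hk μ).KRegular k) (i : Fin k) :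
    fwd hk (bwd hk μ) hreg i = μ i := by
  unfold fwd
  have h1 : splitS k i (betaSet (bwd hk μ)) = betaSet (μ i) := by
    unfold bwd
    rw [betaSet_toPart, split_join i.isLt, Tfun_lt hk μ i.isLt]
  exact (toPart_congr h1 _ (charge0_betaSet (goodBnd_spec (μ i)))).trans
    (toPart_betaSet (μ i) _)

lemma fwd_size (hk : 1 ≤ k) {n : ℕ} (P : PartitionSeq) (hreg : P.KRegular k) (hsize : P.size = k * n) :
    ∑ i, (fwd hk P hreg i).size = n := by
  set M₁ := goodBnd P with hM₁
  have hg : Good P (k * M₁) := good_mul hk P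
  have hBS : Bound (betaSet P) (k * M₁) := bound_betaSet hg
  have hall : ∀ c : ℕ, c < k → Charge0 (splitS k c (betaSet P)) :=
    (kregular_iff hk hg).mp hreg
  have hsz : ∀ i : Fin k, (fwd hk P hreg i).size = PC (splitS k i (betaSet P)) M₁ := by
    intro i
    unfold fwd
    exact size_toPart _ (bound_split_mul i.isLt hBS)
  have h1 : ∑ i, (fwd hk P hreg i).size
      = ∑ i ∈ Finset.range k, PC (splitS k i (betaSet P)) M₁ := by
    rw [Finset.sum_congr rfl (fun i _ => hsz i)]
    exact Fin.sum_univ_eq_sum_range (fun i => PC (splitS k i (betaSet P)) M₁) k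
  have h2 : PC (betaSet P) (k*M₁) = k * ∑ i ∈ Finset.range k, PC (splitS k i (betaSet P)) M₁ :=
    PC_box_mul hk hBS hall
  have h3 : P.size = PC (betaSet P) (k*M₁) := size_eq_PC hg
  rw [h1]
  apply Nat.eq_of_mul_eq_mul_left (show 0 < k by omega)
  omega

lemma bwd_size (hk : 1 ≤ k) {n : ℕ} (μ : Fin k → PartitionSeq) (hsum : ∑ i, (μ i).size = n) :
    (bwd hk μ).size = k * n := by
  set M₁ := unifM μ + goodBnd (bwd hk μ) with hM₁
  have hgood : Good (bwd hk μ) (k * M₁) :=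
    (goodBnd_spec _).mono (le_trans (by omega) (Nat.le_mul_of_pos_left M₁ hk))
  have hBT : ∀ i, i < k → Bound (Tfun hk μ i) M₁ := Tfun_bound hk μ (by omega)
  have hS : betaSet (bwd hk μ) = joinS k (Tfun hk μ) := by
    unfold bwd; rw [betaSet_toPart]
  have hBS : Bound (joinS k (Tfun hk μ)) (k * M₁) := bound_joinS hk hBT
  have hall : ∀ c : ℕ, c < k → Charge0 (splitS k c (joinS k (Tfun hk μ))) := by
    intro c hc
    rw [split_join hc]
    exact Tfun_charge0 hk μ c hc
  have h3 : (bwd hk μ).size = PC (betaSet (bwd hk μ)) (k*M₁) := size_eq_PC hgood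
  rw [h3, hS, PC_box_mul hk hBS hall]
  congr 1
  have h4 : ∀ i ∈ Finset.range k, PC (splitS k i (joinS k (Tfun hk μ))) M₁
      = (μ ⟨i % k, Nat.mod_lt _ hk⟩).size := by
    intro i hi
    simp only [Finset.mem_range] at hi
    rw [split_join hi]
    have hgi : Good (μ ⟨i % k, Nat.mod_lt _ hk⟩) M₁ := (unifM_spec μ _).mono (by omega)
    have := size_eq_PC hgi
    rw [this]
    rfl
  rw [Finset.sum_congr rfl h4]
  rw [← Fin.sum_univ_eq_sum_range (fun i => (μ ⟨i % k, Nat.mod_lt _ hk⟩).size) k]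
  rw [← hsum]
  apply Finset.sum_congr rfl
  intro i _
  have h : (⟨(i:ℕ) % k, Nat.mod_lt _ hk⟩ : Fin k) = i :=
    Fin.ext (by simp [Nat.mod_eq_of_lt i.isLt])
  rw [h]

lemma bwd_kregular (hk : 1 ≤ k) (μ : Fin k → PartitionSeq) : (bwd hk μ).KRegular k := by
  set M₁ := unifM μ + goodBnd (bwd hk μ) with hM₁
  have hgood : Good (bwd hk μ) (k * M₁) :=
    (goodBnd_spec _).mono (le_trans (by omega) (Nat.le_mul_of_pos_left M₁ hk))
  have hS : betaSet (bwd hk μ) = joinS k (Tfun hk μ) := by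
    unfold bwd; rw [betaSet_toPart]
  apply (kregular_iff hk hgood).mpr
  intro c hc
  rw [hS, split_join hc]
  exact Tfun_charge0 hk μ c hc

end main
end KQ
/-- For every `k ≥ 1` and every `n`, there is a bijection (the `k`-quotient)
between the set of `k`-regular partitions of `kn` and the set of `k`-tuples of
partitions of total size `n`; in particular the two sets have the same number
of elements. -/
theorem kRegular_equiv_kTuples (k : ℕ) (hk : 1 ≤ k) (n : ℕ) :
    Nonempty
      ({P : PartitionSeq | P.size = k * n ∧ P.KRegular k} ≃
        {μ : Fin k → PartitionSeq | ∑ i, (μ i).size = n}) := by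
  constructor
  refine
    { toFun := fun P => ⟨KQ.fwd hk P.1 P.2.2, KQ.fwd_size hk P.1 P.2.2 P.2.1⟩
      invFun := fun μ => ⟨KQ.bwd hk μ.1, KQ.bwd_size hk μ.1 μ.2, KQ.bwd_kregular hk μ.1⟩
      left_inv := ?_
      right_inv := ?_ }
  · rintro ⟨P, hP⟩
    apply Subtype.ext
    exact KQ.bwd_fwd hk P hP.2
  · rintro ⟨μ, hμ⟩
    apply Subtype.ext
    funext i
    exact KQ.fwd_bwd hk μ (KQ.bwd_kregular hk μ) i
end

section
/- Let k ≥ 1 and n ≥ 0, and let λ be a k-regular partition of kn. Then exactly n cells of the Young diagram of λ have hook length divisible by k. -/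
namespace KRegAux

/-- a finite lower set of ℕ is an initial segment -/
lemma lower_mem_iff {S : Set ℕ} (hf : S.Finite) (hl : ∀ ⦃x y : ℕ⦄, x ≤ y → y ∈ S → x ∈ S)
    (x : ℕ) : x ∈ S ↔ x < S.ncard := by
  constructor
  · intro hx
    have hsub : (Set.Iic x) ⊆ S := fun y hy => hl hy hx
    have h1 : (Set.Iic x).ncard ≤ S.ncard := Set.ncard_le_ncard hsub hf
    have h2 : (Set.Iic x).ncard = x + 1 := by
      rw [show Set.Iic x = ↑(Finset.Iic x) by simp, Set.ncard_coe_finset, Nat.card_Iic]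
    omega
  · intro hx
    by_contra hxS
    have hsub : S ⊆ Set.Iio x := by
      intro y hy
      simp only [Set.mem_Iio]
      by_contra hyx
      exact hxS (hl (by omega) hy)
    have h1 : S.ncard ≤ (Set.Iio x).ncard := Set.ncard_le_ncard hsub (Set.finite_Iio x)
    have h2 : (Set.Iio x).ncard = x := by
      rw [show Set.Iio x = ↑(Finset.Iio x) by simp, Set.ncard_coe_finset, Nat.card_Iio]
    omega

lemma conj_lt_iff (P : PartitionSeq) {N : ℕ} (hz : ∀ a, N ≤ a → P.f a = 0) (a b : ℕ) :
    b < P.f a ↔ a < P.conj b := by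
  have hfin : {a : ℕ | b < P.f a}.Finite := by
    apply (Set.finite_Iio N).subset
    intro x hx
    simp only [Set.mem_setOf_eq] at hx
    simp only [Set.mem_Iio]
    by_contra h
    rw [hz x (by omega)] at hx; omega
  exact lower_mem_iff hfin (fun x y hxy hy => lt_of_lt_of_le hy (P.antitone x y hxy)) a

lemma conj_le (P : PartitionSeq) {N : ℕ} (hz : ∀ a, N ≤ a → P.f a = 0) (b : ℕ) :
    P.conj b ≤ N := by
  by_contra h
  have := (conj_lt_iff P hz N b).mpr (by omega)
  rw [hz N le_rfl] at this; omega

end KRegAux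
-- beta numbers and the gap function
noncomputable section
namespace KRegAux

def bet (P : PartitionSeq) (N a : ℕ) : ℕ := P.f a + (N - 1 - a)

def gp (P : PartitionSeq) (N b : ℕ) : ℕ := N + b - P.conj b

def BB (P : PartitionSeq) (N : ℕ) : Finset ℕ := (Finset.range N).image (bet P N)

variable (P : PartitionSeq) {N : ℕ} (hz : ∀ a, N ≤ a → P.f a = 0)

lemma bet_strictAnti {a a' : ℕ} (h : a < a') (h' : a' < N) : bet P N a' < bet P N a := by
  have := P.antitone a a' (le_of_lt h)
  unfold bet; omega

lemma bet_inj {a a' : ℕ} (ha : a < N) (ha' : a' < N) (h : bet P N a = bet P N a') : a = a' := by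
  rcases lt_trichotomy a a' with hc | hc | hc
  · have := bet_strictAnti P hc ha'; omega
  · exact hc
  · have := bet_strictAnti P hc ha; omega

lemma card_BB : (BB P N).card = N := by
  rw [BB, Finset.card_image_of_injOn, Finset.card_range]
  intro a ha a' ha' h
  simp only [Finset.coe_range, Set.mem_Iio] at ha ha'
  exact bet_inj P ha ha' h

lemma mem_BB {x : ℕ} : x ∈ BB P N ↔ ∃ a < N, bet P N a = x := by
  simp [BB]

include hz

lemma gp_strictMono (b : ℕ) : gp P N b < gp P N (b + 1) := by
  have h1 : P.conj (b+1) ≤ P.conj b := by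
    have hmono : ∀ x, x < P.conj (b+1) → x < P.conj b := by
      intro x hx
      have := (conj_lt_iff P hz x (b+1)).mpr hx
      exact (conj_lt_iff P hz x b).mp (by omega)
    by_contra h
    have := hmono (P.conj b) (by omega); omega
  have h2 := conj_le P hz b
  have h3 := conj_le P hz (b+1)
  unfold gp; omega

lemma gp_smono : StrictMono (gp P N) :=
  strictMono_nat_of_lt_succ (gp_strictMono P hz)

lemma gp_mono {b b' : ℕ} (h : b ≤ b') : gp P N b ≤ gp P N b' :=
  (gp_smono P hz).monotone h

lemma gp_inj {b b' : ℕ} (h : gp P N b = gp P N b') : b = b' := by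
  rcases lt_trichotomy b b' with hc | hc | hc
  · have h1 := gp_strictMono P hz b
    have h2 := gp_mono P hz (show b + 1 ≤ b' by omega); omega
  · exact hc
  · have h1 := gp_strictMono P hz b'
    have h2 := gp_mono P hz (show b' + 1 ≤ b by omega); omega

-- cell (a,b) gives pair (bet a, gp b)
lemma gp_lt_bet {a b : ℕ} (hb : b < P.f a) (ha : a < N) : gp P N b < bet P N a := by
  have h1 : a < P.conj b := (conj_lt_iff P hz a b).mp hb
  have h2 := conj_le P hz b
  unfold gp bet; omega

lemma lt_f_of_gp_lt {a b : ℕ} (ha : a < N) (h : gp P N b < bet P N a) : b < P.f a := by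
  rcases Nat.lt_or_ge b (P.f a) with h' | h'
  · exact h'
  · exfalso
    have h1 : ¬ a < P.conj b := fun hc => by
      have := (conj_lt_iff P hz a b).mpr hc; omega
    have h2 := conj_le P hz b
    unfold gp bet at h; omega

lemma gp_not_mem_BB (b : ℕ) : gp P N b ∉ BB P N := by
  rw [mem_BB]
  rintro ⟨a', ha', heq⟩
  have h2 := conj_le P hz b
  rcases Nat.lt_or_ge b (P.f a') with h' | h'
  · have h1 : a' < P.conj b := (conj_lt_iff P hz a' b).mp h'
    unfold bet gp at heq; omega
  · have h1 : ¬ a' < P.conj b := fun hc => by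
      have := (conj_lt_iff P hz a' b).mpr hc; omega
    unfold bet gp at heq; omega

lemma exists_gp_eq {y : ℕ} (hy : y ∉ BB P N) : ∃ b, gp P N b = y := by
  have hc0 := conj_le P hz 0
  -- small y are in B
  have hsmall : ∀ z, z < N - P.conj 0 → z ∈ BB P N := by
    intro z hzlt
    rw [mem_BB]
    refine ⟨N - 1 - z, by omega, ?_⟩
    have hfz : P.f (N - 1 - z) = 0 := by
      by_contra hf
      have : N - 1 - z < P.conj 0 := (conj_lt_iff P hz (N-1-z) 0).mp (by omega)
      omega
    unfold bet; omega
  have hy0 : gp P N 0 ≤ y := by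
    by_contra h
    exact hy (hsmall y (by unfold gp at h; omega))
  have hgb : ∀ b, gp P N b ≥ b := fun b => by
    have := conj_le P hz b; unfold gp; omega
  obtain ⟨b, hble, hspec, hnotS⟩ :
      ∃ b, b ≤ y ∧ gp P N b ≤ y ∧ (b + 1 ≤ y → ¬ gp P N (b+1) ≤ y) :=
    ⟨Nat.findGreatest (fun b' => gp P N b' ≤ y) y, Nat.findGreatest_le y,
      Nat.findGreatest_spec (P := fun b' => gp P N b' ≤ y) (Nat.zero_le y) hy0,
      fun hby => Nat.findGreatest_is_greatest (P := fun b' => gp P N b' ≤ y)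
        (Nat.lt_succ_self _) hby⟩
  refine ⟨b, ?_⟩
  rcases Nat.lt_or_ge y (b + 1) with hby | hby
  · have hbeq : b = y := by omega
    subst hbeq
    have := hgb b; omega
  · have hnot : ¬ gp P N (b + 1) ≤ y := hnotS hby
    -- if gp b < y, derive y ∈ BB
    rcases Nat.lt_or_ge (gp P N b) y with hlt | hge
    · exfalso
      have h2b := conj_le P hz b
      have h2b1 := conj_le P hz (b+1)
      unfold gp at hlt hnot
      set s := N + b - y with hs
      have hs1 : s < P.conj b := by omega
      have hs2 : P.conj (b+1) ≤ s := by omega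
      have hf1 : b < P.f s := (conj_lt_iff P hz s b).mpr hs1
      have hf2 : ¬ (b + 1 < P.f s) := fun hc => by
        have := (conj_lt_iff P hz s (b+1)).mp hc; omega
      have hfs : P.f s = b + 1 := by omega
      apply hy
      rw [mem_BB]
      have hsN : s < N := by
        by_contra hc
        rw [hz s (by omega)] at hfs; omega
      exact ⟨s, hsN, by unfold bet; omega⟩
    · omega

omit hz

/-! counting function φ -/

def phi (k c x : ℕ) : ℕ := x / k + (if 1 ≤ c ∧ c ≤ x % k then 1 else 0)

lemma phi_zero (k c : ℕ) : phi k c 0 = 0 := by simp [phi]; omega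

lemma phi_succ {k : ℕ} (hk : 0 < k) {c : ℕ} (hc : c < k) (x : ℕ) :
    phi k c (x+1) = phi k c x + (if (x+1) % k = c then 1 else 0) := by
  obtain ⟨q, r, hrk, hx⟩ : ∃ q r, r < k ∧ x = k * q + r :=
    ⟨x / k, x % k, Nat.mod_lt x hk, (Nat.div_add_mod x k).symm⟩
  subst hx
  rcases Nat.lt_or_ge (r+1) k with h | h
  · have e1 : (k * q + r) % k = r := by
      rw [Nat.mul_add_mod]; exact Nat.mod_eq_of_lt (by omega)
    have e2 : (k * q + r) / k = q := by
      rw [Nat.mul_add_div hk, Nat.div_eq_of_lt (by omega)]; omega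
    have e3 : (k * q + r + 1) % k = r + 1 := by
      have h4 : k*q + r + 1 = k*q + (r+1) := by omega
      rw [h4, Nat.mul_add_mod]; exact Nat.mod_eq_of_lt h
    have e4 : (k * q + r + 1) / k = q := by
      have h4 : k*q + r + 1 = k*q + (r+1) := by omega
      rw [h4, Nat.mul_add_div hk, Nat.div_eq_of_lt h]; omega
    unfold phi
    rw [e1, e2, e3, e4]
    split_ifs <;> omega
  · have h4 : k * q + r + 1 = k * (q + 1) := by rw [Nat.mul_succ]; omega
    have e3 : (k * q + r + 1) % k = 0 := by rw [h4]; exact Nat.mul_mod_right k (q+1)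
    have e4 : (k * q + r + 1) / k = q + 1 := by
      rw [h4]; exact Nat.mul_div_cancel_left (q+1) hk
    have e1 : (k * q + r) % k = r := by
      rw [Nat.mul_add_mod]; exact Nat.mod_eq_of_lt (by omega)
    have e2 : (k * q + r) / k = q := by
      rw [Nat.mul_add_div hk, Nat.div_eq_of_lt (by omega)]; omega
    unfold phi
    rw [e1, e2, e3, e4]
    split_ifs <;> omega

lemma phi_id {k : ℕ} (hk : 0 < k) (x : ℕ) : phi k 0 x = x / k := by simp [phi]

/-- translation of the color condition -/
lemma cond_iff {k a t c : ℕ} (hd : k ∣ (a + t + 1)) (hk : 0 < k) (hc : c < k) (b : ℕ) :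
    (((b:ℤ) - (a:ℤ)) % (k:ℤ) = (c:ℤ)) ↔ ((b + t + 1) % k = c) := by
  obtain ⟨u, hu⟩ := hd
  have hu' : (a:ℤ) + t + 1 = (k:ℤ) * u := by exact_mod_cast hu
  have key : ((b + t + 1 : ℕ) : ℤ) = ((b:ℤ) - a) + (k:ℤ) * u := by push_cast; linarith
  have h2 : ((b + t + 1 : ℕ) : ℤ) % (k:ℤ) = ((b:ℤ) - a) % (k:ℤ) := by
    rw [key, Int.add_mul_emod_self_left]
  have h3 : ((b + t + 1 : ℕ) : ℤ) % (k:ℤ) = (((b + t + 1) % k : ℕ) : ℤ) := by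
    exact (Int.natCast_mod _ _).symm
  constructor
  · intro h
    have : (((b + t + 1) % k : ℕ) : ℤ) = (c : ℤ) := by rw [← h3, h2, h]
    exact_mod_cast this
  · intro h
    rw [← h2, h3]; exact_mod_cast congrArg (Nat.cast : ℕ → ℤ) h

/-- the row-counting lemma -/
lemma row_count {k a t c : ℕ} (hd : k ∣ (a + t + 1)) (hk : 0 < k) (hc : c < k) (v : ℕ) :
    ((Finset.range v).filter (fun b : ℕ => ((b:ℤ) - (a:ℤ)) % (k:ℤ) = (c:ℤ))).card + phi k c t
      = phi k c (v + t) := by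
  induction v with
  | zero => simp [phi]
  | succ v ih =>
    rw [Finset.range_add_one, Finset.filter_insert]
    have hvt : v + 1 + t = (v + t) + 1 := by omega
    rw [hvt, phi_succ hk hc]
    have hiff := cond_iff hd hk hc v
    have hnm : v ∉ (Finset.range v).filter (fun b : ℕ => ((b:ℤ) - (a:ℤ)) % (k:ℤ) = (c:ℤ)) := by
      simp
    by_cases hcnd : ((v:ℤ) - (a:ℤ)) % (k:ℤ) = (c:ℤ)
    · have hmod : (v + t + 1) % k = c := hiff.mp hcnd
      rw [if_pos hcnd, Finset.card_insert_of_notMem hnm, if_pos hmod]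
      omega
    · have hmod : ¬ ((v + t + 1) % k = c) := fun hmod => hcnd (hiff.mpr hmod)
      rw [if_neg hcnd, if_neg hmod]
      omega

/-! cells as a Finset, and the colorCount identity -/

def cellsFin (P : PartitionSeq) (N : ℕ) : Finset (ℕ × ℕ) :=
  (Finset.range N).biUnion (fun a => (Finset.range (P.f a)).image (fun b => (a, b)))

lemma mem_cellsFin (p : ℕ × ℕ) : p ∈ cellsFin P N ↔ p.1 < N ∧ p.2 < P.f p.1 := by
  unfold cellsFin
  simp only [Finset.mem_biUnion, Finset.mem_range, Finset.mem_image]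
  constructor
  · rintro ⟨a, ha, b, hb, rfl⟩; exact ⟨ha, hb⟩
  · rintro ⟨h1, h2⟩; exact ⟨p.1, h1, p.2, h2, rfl⟩

include hz in
lemma cells_filter_ncard (Q : ℕ × ℕ → Prop) [DecidablePred Q] :
    {p ∈ P.cells | Q p}.ncard = ((cellsFin P N).filter Q).card := by
  have hset : {p ∈ P.cells | Q p} = ↑((cellsFin P N).filter Q) := by
    ext p
    simp only [Set.mem_setOf_eq, Finset.coe_filter, mem_cellsFin, PartitionSeq.cells]
    constructor
    · rintro ⟨h1, h2⟩
      refine ⟨⟨?_, h1⟩, h2⟩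
      by_contra h
      rw [hz p.1 (by omega)] at h1; omega
    · rintro ⟨⟨_, h1⟩, h2⟩; exact ⟨h1, h2⟩
  rw [hset, Set.ncard_coe_finset]

lemma card_filter_cellsFin (Q : ℕ × ℕ → Prop) [DecidablePred Q] :
    ((cellsFin P N).filter Q).card
      = ∑ a ∈ Finset.range N, ((Finset.range (P.f a)).filter (fun b => Q (a, b))).card := by
  unfold cellsFin
  rw [Finset.filter_biUnion]
  rw [Finset.card_biUnion]
  · apply Finset.sum_congr rfl
    intro a _
    rw [Finset.filter_image, Finset.card_image_of_injective _ (fun b b' h => by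
      simpa using congrArg Prod.snd h)]
  · intro a _ a' _ hne
    apply Finset.disjoint_left.mpr
    intro p hp hp'
    have h1 : p.1 = a := by
      simp only [Finset.mem_filter, Finset.mem_image] at hp
      obtain ⟨⟨b, _, rfl⟩, _⟩ := hp; rfl
    have h2 : p.1 = a' := by
      simp only [Finset.mem_filter, Finset.mem_image] at hp'
      obtain ⟨⟨b, _, rfl⟩, _⟩ := hp'; rfl
    exact hne (h1 ▸ h2 ▸ rfl)

include hz in
/-- the fundamental identity for color counts -/
lemma colorCount_identity {k : ℕ} (hk : 0 < k) (hN : k ∣ N) {c : ℕ} (hc : c < k) :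
    P.colorCount k (c : ℤ) + ∑ x ∈ Finset.range N, phi k c x
      = ∑ x ∈ BB P N, phi k c x := by
  have h1 : P.colorCount k (c : ℤ)
      = ((cellsFin P N).filter (fun p => ((p.2:ℤ) - (p.1:ℤ)) % (k:ℤ) = (c:ℤ))).card := by
    unfold PartitionSeq.colorCount
    exact cells_filter_ncard P hz _
  rw [h1, card_filter_cellsFin]
  -- row a: count + phi (N-1-a) = phi (bet a)
  have hrow : ∀ a ∈ Finset.range N,
      ((Finset.range (P.f a)).filter (fun b : ℕ => ((b:ℤ) - (a:ℤ)) % (k:ℤ) = (c:ℤ))).card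
        + phi k c (N - 1 - a) = phi k c (bet P N a) := by
    intro a ha
    simp only [Finset.mem_range] at ha
    have hd : k ∣ (a + (N - 1 - a) + 1) := by
      have : a + (N - 1 - a) + 1 = N := by omega
      rw [this]; exact hN
    have := row_count (a := a) (t := N - 1 - a) hd hk hc (P.f a)
    rw [this]; rfl
  have hsum :
      (∑ a ∈ Finset.range N,
        ((Finset.range (P.f a)).filter (fun b : ℕ => ((b:ℤ) - (a:ℤ)) % (k:ℤ) = (c:ℤ))).card)
        + ∑ a ∈ Finset.range N, phi k c (N - 1 - a)
      = ∑ a ∈ Finset.range N, phi k c (bet P N a) := by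
    rw [← Finset.sum_add_distrib]
    exact Finset.sum_congr rfl hrow
  have hrefl : ∑ a ∈ Finset.range N, phi k c (N - 1 - a)
      = ∑ x ∈ Finset.range N, phi k c x := Finset.sum_range_reflect (fun x => phi k c x) N
  have himg : ∑ x ∈ BB P N, phi k c x = ∑ a ∈ Finset.range N, phi k c (bet P N a) := by
    rw [BB, Finset.sum_image]
    intro a ha a' ha' h
    simp only [Finset.coe_range, Finset.mem_coe, Finset.mem_range, Set.mem_Iio] at ha ha'
    exact bet_inj P ha ha' h
  rw [himg, ← hsum, hrefl]

/-! counting residues below x, and pair counts -/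

omit hz

lemma modcount {k : ℕ} (hk : 0 < k) (x : ℕ) :
    ((Finset.range x).filter (fun y => y % k = x % k)).card = x / k := by
  have himg : (Finset.range x).filter (fun y => y % k = x % k)
      = (Finset.range (x / k)).image (fun j => x - (j+1)*k) := by
    ext y
    simp only [Finset.mem_filter, Finset.mem_range, Finset.mem_image]
    constructor
    · rintro ⟨hyx, hmod⟩
      have hdvd : k ∣ x - y := (Nat.modEq_iff_dvd' (le_of_lt hyx)).mp hmod
      obtain ⟨j', hj'⟩ := hdvd
      have hj'pos : 1 ≤ j' := by
        rcases Nat.eq_zero_or_pos j' with h | h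
        · subst h; omega
        · omega
      have hkj : j' * k ≤ x := by
        have : k * j' = j' * k := Nat.mul_comm k j'
        omega
      refine ⟨j' - 1, ?_, ?_⟩
      · have : j' ≤ x / k := (Nat.le_div_iff_mul_le hk).mpr hkj
        omega
      · have : (j' - 1 + 1) * k = j' * k := by congr 1; omega
        rw [this]
        have : j' * k = k * j' := Nat.mul_comm _ _
        omega
    · rintro ⟨j, hj, rfl⟩
      have hjk : (j+1) * k ≤ x := by
        calc (j+1) * k ≤ (x/k) * k := Nat.mul_le_mul_right k (by omega)
        _ ≤ x := Nat.div_mul_le_self x k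
      constructor
      · have : 1 ≤ (j+1)*k := by
          calc 1 ≤ (j+1) := by omega
          _ ≤ (j+1) * k := Nat.le_mul_of_pos_right _ hk
        omega
      · have hx : x = (x - (j+1)*k) + (j+1)*k := by omega
        conv_rhs => rw [hx]
        rw [Nat.add_mul_mod_self_right]
  rw [himg, Finset.card_image_of_injOn, Finset.card_range]
  intro j1 hj1 j2 hj2 heq
  simp only [Finset.coe_range, Set.mem_Iio] at hj1 hj2
  have h1 : (j1+1) * k ≤ x := by
    calc (j1+1) * k ≤ (x/k) * k := Nat.mul_le_mul_right k (by omega)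
    _ ≤ x := Nat.div_mul_le_self x k
  have h2 : (j2+1) * k ≤ x := by
    calc (j2+1) * k ≤ (x/k) * k := Nat.mul_le_mul_right k (by omega)
    _ ≤ x := Nat.div_mul_le_self x k
  have heq' : x - (j1+1)*k = x - (j2+1)*k := heq
  have h3 : (j1+1) * k = (j2+1) * k := by omega
  have := Nat.eq_of_mul_eq_mul_right hk h3
  omega

lemma double_pairs (s : Finset ℕ) :
    2 * (∑ x ∈ s, (s.filter (fun y => y < x)).card) + s.card = s.card * s.card := by
  have hA : ∑ x ∈ s, (s.filter (fun y => y < x)).card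
      = ∑ x ∈ s, ∑ y ∈ s, (if y < x then 1 else 0) := by
    apply Finset.sum_congr rfl; intro x _; rw [Finset.card_filter]
  have hB : ∑ x ∈ s, ∑ y ∈ s, (if y < x then 1 else 0)
      = ∑ x ∈ s, ∑ y ∈ s, (if x < y then 1 else 0) := by
    rw [Finset.sum_comm]
  have hC : ∑ x ∈ s, ∑ y ∈ s, (if (x : ℕ) = y then 1 else 0) = s.card := by
    rw [Finset.card_eq_sum_ones]
    apply Finset.sum_congr rfl; intro x hx
    rw [Finset.sum_ite_eq s x (fun _ => 1), if_pos hx]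
  have htot : ∑ x ∈ s, ∑ y ∈ s, ((if y < x then 1 else 0) + (if x < y then 1 else 0)
      + (if (x:ℕ) = y then 1 else 0)) = s.card * s.card := by
    have : ∀ x ∈ s, ∀ y ∈ s, (if y < x then 1 else 0) + (if x < y then 1 else 0)
        + (if (x:ℕ) = y then 1 else 0) = 1 := by
      intro x _ y _; split_ifs <;> omega
    calc ∑ x ∈ s, ∑ y ∈ s, ((if y < x then 1 else 0) + (if x < y then 1 else 0)
          + (if (x:ℕ) = y then 1 else 0))
        = ∑ x ∈ s, ∑ y ∈ s, 1 := by
          apply Finset.sum_congr rfl; intro x hx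
          apply Finset.sum_congr rfl; intro y hy
          exact this x hx y hy
      _ = s.card * s.card := by
          rw [Finset.sum_congr rfl (fun x _ => by rw [Finset.sum_const, smul_eq_mul, mul_one]),
            Finset.sum_const, smul_eq_mul]
  simp only [Finset.sum_add_distrib] at htot
  omega

lemma pairs_card_eq {s t : Finset ℕ} (h : s.card = t.card) :
    ∑ x ∈ s, (s.filter (fun y => y < x)).card
      = ∑ x ∈ t, (t.filter (fun y => y < x)).card := by
  have h1 := double_pairs s
  have h2 := double_pairs t
  rw [h] at h1
  omega

lemma card_range_residue {k : ℕ} (hk : 0 < k) (m r : ℕ) (hr : r < k) :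
    ((Finset.range (k * m)).filter (fun x => x % k = r)).card = m := by
  have himg : (Finset.range (k * m)).filter (fun x => x % k = r)
      = (Finset.range m).image (fun j => k * j + r) := by
    ext x
    simp only [Finset.mem_filter, Finset.mem_range, Finset.mem_image]
    constructor
    · rintro ⟨hxm, hmod⟩
      refine ⟨x / k, ?_, ?_⟩
      · rw [Nat.div_lt_iff_lt_mul hk]
        have : m * k = k * m := Nat.mul_comm m k
        omega
      · have := Nat.div_add_mod x k; omega
    · rintro ⟨j, hj, rfl⟩
      constructor
      · calc k * j + r < k * j + k := by omega
          _ = k * (j + 1) := by ring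
          _ ≤ k * m := Nat.mul_le_mul_left k (by omega)
      · rw [Nat.mul_add_mod]; exact Nat.mod_eq_of_lt hr
  rw [himg, Finset.card_image_of_injOn, Finset.card_range]
  intro j1 _ j2 _ heq
  have heq' : k * j1 + r = k * j2 + r := heq
  have h3 : k * j1 = k * j2 := by omega
  exact Nat.eq_of_mul_eq_mul_left hk h3

/-! residue class sizes of the beta-set, from regularity -/

lemma filter_ge_split (s : Finset ℕ) (k c : ℕ) :
    (s.filter (fun x => c ≤ x % k)).card
      = (s.filter (fun x => x % k = c)).card + (s.filter (fun x => c + 1 ≤ x % k)).card := by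
  have hsplit : s.filter (fun x => c ≤ x % k)
      = (s.filter (fun x => x % k = c)) ∪ (s.filter (fun x => c + 1 ≤ x % k)) := by
    rw [← Finset.filter_or]
    apply Finset.filter_congr
    intro x _
    constructor
    · intro h; omega
    · intro h; omega
  rw [hsplit, Finset.card_union_of_disjoint]
  rw [Finset.disjoint_left]
  intro x h1 h2
  simp only [Finset.mem_filter] at h1 h2
  omega

lemma filter_ge_zero (s : Finset ℕ) (k : ℕ) :
    (s.filter (fun x => 0 ≤ x % k)).card = s.card := by
  rw [Finset.filter_true_of_mem (fun x _ => Nat.zero_le _)]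

lemma filter_ge_top (s : Finset ℕ) {k c : ℕ} (hk : 0 < k) (hc : k ≤ c) :
    (s.filter (fun x => c ≤ x % k)).card = 0 := by
  rw [Finset.card_eq_zero, Finset.filter_eq_empty_iff]
  intro x _
  have := Nat.mod_lt x hk
  omega

variable {k m : ℕ}

include hz in
lemma sum_chi_eq (hk : 0 < k) (hN : N = k * m) (hreg : P.KRegular k) {c : ℕ} (hc1 : 1 ≤ c)
    (hck : c < k) :
    ((BB P N).filter (fun x => c ≤ x % k)).card
      = ((Finset.range N).filter (fun x => c ≤ x % k)).card := by
  have hid0 := colorCount_identity P hz hk (hN ▸ Dvd.intro m rfl) (show 0 < k from hk)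
  have hidc := colorCount_identity P hz hk (hN ▸ Dvd.intro m rfl) hck
  have hregc : P.colorCount k ((c : ℕ) : ℤ) = P.colorCount k ((0 : ℕ) : ℤ) :=
    hreg c (Finset.mem_range.mpr hck) 0 (Finset.mem_range.mpr hk)
  -- split phi sums
  have hphisplit : ∀ (s : Finset ℕ) (c' : ℕ), 1 ≤ c' → ∑ x ∈ s, phi k c' x
      = (∑ x ∈ s, x / k) + (s.filter (fun x => c' ≤ x % k)).card := by
    intro s c' hc'
    rw [Finset.card_filter, ← Finset.sum_add_distrib]
    apply Finset.sum_congr rfl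
    intro x _
    unfold phi
    split_ifs <;> omega
  have hphizero : ∀ (s : Finset ℕ), ∑ x ∈ s, phi k 0 x = ∑ x ∈ s, x / k := by
    intro s
    apply Finset.sum_congr rfl
    intro x _
    exact phi_id hk x
  rw [hphisplit _ c hc1, hphisplit _ c hc1] at hidc
  rw [hphizero, hphizero] at hid0
  rw [hregc] at hidc
  omega

include hz in
lemma card_BB_residue (hk : 0 < k) (hN : N = k * m) (hreg : P.KRegular k) :
    ∀ r, r < k → ((BB P N).filter (fun x => x % k = r)).card = m := by
  -- W_B c = W_N c for all c
  have hW : ∀ c, ((BB P N).filter (fun x => c ≤ x % k)).card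
      = ((Finset.range N).filter (fun x => c ≤ x % k)).card := by
    intro c
    rcases Nat.eq_zero_or_pos c with hc0 | hc1
    · subst hc0
      rw [filter_ge_zero, filter_ge_zero, card_BB P, Finset.card_range]
    · rcases Nat.lt_or_ge c k with hck | hck
      · exact sum_chi_eq P hz hk hN hreg hc1 hck
      · rw [filter_ge_top _ hk hck, filter_ge_top _ hk hck]
  intro r hr
  have h1 := filter_ge_split (BB P N) k r
  have h2 := filter_ge_split (Finset.range N) k r
  have h3 := hW r
  have h4 := hW (r + 1)
  have h5 : ((Finset.range N).filter (fun x => x % k = r)).card = m := by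
    rw [hN]; exact card_range_residue hk m r hr
  omega

/-! the set of cells with hook length divisible by k, as pairs of beta-numbers -/

open scoped Classical in
noncomputable def HFin (P : PartitionSeq) (k N : ℕ) : Finset (ℕ × ℕ) :=
  (cellsFin P N).filter (fun p => (k:ℤ) ∣ P.hook p)

noncomputable def pairsFin (P : PartitionSeq) (k N : ℕ) : Finset (ℕ × ℕ) :=
  (BB P N).biUnion (fun x =>
    ((Finset.range x).filter (fun y => y % k = x % k ∧ y ∉ BB P N)).image (fun y => (x, y)))

include hz in
lemma hook_eq_bet_sub_gp {p : ℕ × ℕ} (ha : p.1 < N) :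
    P.hook p = (bet P N p.1 : ℤ) - (gp P N p.2 : ℤ) := by
  have hcb := conj_le P hz p.2
  unfold PartitionSeq.hook bet gp
  omega

include hz in
lemma card_HFin_eq_pairs {k : ℕ} (hk : 0 < k) :
    (HFin P k N).card = (pairsFin P k N).card := by
  classical
  apply Finset.card_bij (fun p (_ : p ∈ HFin P k N) => (bet P N p.1, gp P N p.2))
  · -- maps to
    intro p hp
    rw [HFin, Finset.mem_filter, mem_cellsFin] at hp
    obtain ⟨⟨ha, hb⟩, hdvd⟩ := hp
    have hlt := gp_lt_bet P hz hb ha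
    rw [hook_eq_bet_sub_gp P hz ha] at hdvd
    have hcast : ((bet P N p.1 - gp P N p.2 : ℕ) : ℤ)
        = (bet P N p.1 : ℤ) - (gp P N p.2 : ℤ) := by omega
    have hdvd' : k ∣ bet P N p.1 - gp P N p.2 :=
      Int.natCast_dvd_natCast.mp (by rw [hcast]; exact hdvd)
    have hmod : gp P N p.2 % k = bet P N p.1 % k :=
      (Nat.modEq_iff_dvd' (le_of_lt hlt)).mpr hdvd'
    rw [pairsFin, Finset.mem_biUnion]
    refine ⟨bet P N p.1, (mem_BB P).mpr ⟨p.1, ha, rfl⟩, Finset.mem_image.mpr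
      ⟨gp P N p.2, Finset.mem_filter.mpr ⟨Finset.mem_range.mpr hlt,
        hmod, gp_not_mem_BB P hz p.2⟩, rfl⟩⟩
  · -- injective
    intro p1 hp1 p2 hp2 heq
    rw [HFin, Finset.mem_filter, mem_cellsFin] at hp1 hp2
    rw [Prod.mk.injEq] at heq
    have h1 : p1.1 = p2.1 := bet_inj P hp1.1.1 hp2.1.1 heq.1
    have h2 : p1.2 = p2.2 := gp_inj P hz heq.2
    exact Prod.ext h1 h2
  · -- surjective
    intro q hq
    rw [pairsFin, Finset.mem_biUnion] at hq
    obtain ⟨x, hxB, hq2⟩ := hq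
    rw [Finset.mem_image] at hq2
    obtain ⟨y, hy, rfl⟩ := hq2
    rw [Finset.mem_filter, Finset.mem_range] at hy
    obtain ⟨hyx, hymod, hynB⟩ := hy
    obtain ⟨a, haN, hba⟩ := (mem_BB P).mp hxB
    obtain ⟨b, hgb⟩ := exists_gp_eq P hz hynB
    have hglt : gp P N b < bet P N a := by omega
    have hbf : b < P.f a := lt_f_of_gp_lt P hz haN hglt
    have hdvdn : k ∣ x - y := (Nat.modEq_iff_dvd' (le_of_lt hyx)).mp hymod
    refine ⟨(a, b), ?_, ?_⟩
    · rw [HFin, Finset.mem_filter, mem_cellsFin]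
      refine ⟨⟨haN, hbf⟩, ?_⟩
      rw [hook_eq_bet_sub_gp P hz (by exact haN : (a, b).1 < N)]
      have hcast : ((x - y : ℕ) : ℤ) = (x : ℤ) - (y : ℤ) := by omega
      have : (bet P N (a,b).1 : ℤ) - (gp P N (a,b).2 : ℤ) = ((x - y : ℕ) : ℤ) := by
        simp only []
        rw [hba, hgb, hcast]
      rw [this]
      exact Int.natCast_dvd_natCast.mpr hdvdn
    · simp only []
      rw [hba, hgb]

lemma card_pairsFin {k : ℕ} :
    (pairsFin P k N).card
      = ∑ x ∈ BB P N,
          ((Finset.range x).filter (fun y => y % k = x % k ∧ y ∉ BB P N)).card := by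
  classical
  rw [pairsFin, Finset.card_biUnion]
  · apply Finset.sum_congr rfl
    intro x _
    exact Finset.card_image_of_injective _ (fun y y' h => by simpa using congrArg Prod.snd h)
  · intro x _ x' _ hne
    apply Finset.disjoint_left.mpr
    intro p hp hp'
    simp only [Finset.mem_image] at hp hp'
    obtain ⟨y, _, rfl⟩ := hp
    obtain ⟨y', _, heq⟩ := hp'
    exact hne (by simpa using (congrArg Prod.fst heq).symm)

/-! pair counting -/

lemma sum_pairs_fiber {k : ℕ} (hk : 0 < k) (s : Finset ℕ) :
    ∑ x ∈ s, (s.filter (fun y => y % k = x % k ∧ y < x)).card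
      = ∑ r ∈ Finset.range k, ∑ x ∈ s.filter (fun x => x % k = r),
          ((s.filter (fun x => x % k = r)).filter (fun y => y < x)).card := by
  classical
  rw [← Finset.sum_fiberwise_of_maps_to
    (g := fun x => x % k) (t := Finset.range k)
    (fun x _ => Finset.mem_range.mpr (Nat.mod_lt x hk))
    (f := fun x => (s.filter (fun y => y % k = x % k ∧ y < x)).card)]
  apply Finset.sum_congr rfl
  intro r _
  apply Finset.sum_congr rfl
  intro x hx
  have hxr : x % k = r := (Finset.mem_filter.mp hx).2
  rw [Finset.filter_filter, hxr]

lemma sum_pairs_residue {k : ℕ} (hk : 0 < k) {s t : Finset ℕ}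
    (hcards : ∀ r, r < k → (s.filter (fun x => x % k = r)).card
      = (t.filter (fun x => x % k = r)).card) :
    ∑ x ∈ s, (s.filter (fun y => y % k = x % k ∧ y < x)).card
      = ∑ x ∈ t, (t.filter (fun y => y % k = x % k ∧ y < x)).card := by
  rw [sum_pairs_fiber hk s, sum_pairs_fiber hk t]
  apply Finset.sum_congr rfl
  intro r hr
  exact pairs_card_eq (hcards r (Finset.mem_range.mp hr))

/-! final assembly lemmas -/

lemma card_cellsFin : (cellsFin P N).card = ∑ a ∈ Finset.range N, P.f a := by
  classical
  have h := card_filter_cellsFin P (N := N) (fun _ => True)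
  simpa [Finset.filter_true] using h

include hz in
lemma size_eq_sum : P.size = ∑ a ∈ Finset.range N, P.f a := by
  apply finsum_eq_sum_of_support_subset
  intro x hx
  simp only [Function.mem_support] at hx
  simp only [Finset.coe_range, Set.mem_Iio]
  by_contra h
  exact hx (hz x (by omega))

include hz in
lemma sum_colorCount {k : ℕ} (hk : 0 < k) :
    ∑ c ∈ Finset.range k, P.colorCount k (c : ℤ) = (cellsFin P N).card := by
  classical
  have hmaps : ∀ p ∈ cellsFin P N, (((p.2:ℤ) - (p.1:ℤ)) % (k:ℤ)).toNat ∈ Finset.range k := by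
    intro p _
    have h1 : 0 ≤ ((p.2:ℤ) - (p.1:ℤ)) % (k:ℤ) := Int.emod_nonneg _ (by exact_mod_cast hk.ne')
    have h2 : ((p.2:ℤ) - (p.1:ℤ)) % (k:ℤ) < (k:ℤ) := Int.emod_lt_of_pos _ (by exact_mod_cast hk)
    rw [Finset.mem_range]
    omega
  rw [Finset.card_eq_sum_card_fiberwise hmaps]
  apply Finset.sum_congr rfl
  intro c hc
  have hck : c < k := Finset.mem_range.mp hc
  rw [PartitionSeq.colorCount, cells_filter_ncard P hz]
  congr 1
  apply Finset.filter_congr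
  intro p _
  have h1 : 0 ≤ ((p.2:ℤ) - (p.1:ℤ)) % (k:ℤ) := Int.emod_nonneg _ (by
    have := hk.ne'; exact_mod_cast this)
  constructor
  · intro h; omega
  · intro h; omega

end KRegAux


open KRegAux in
/-- Let `k ≥ 1` and let `λ` be a `k`-regular partition of `kn`.  Then exactly
`n` cells of the Young diagram of `λ` have hook length divisible by `k`. -/
theorem kRegular_hooks_div_k (k n : ℕ) (hk : 1 ≤ k) (P : PartitionSeq)
    (hsize : P.size = k * n) (hreg : P.KRegular k) :
    {p ∈ P.cells | (k : ℤ) ∣ P.hook p}.ncard = n := by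
  classical
  have hk0 : 0 < k := hk
  obtain ⟨N₀, hN₀⟩ := P.eventually_zero
  set m := N₀ with hmdef
  set N := k * m with hNdef
  have hz : ∀ a, N ≤ a → P.f a = 0 := by
    intro a ha
    exact hN₀ a (le_trans (Nat.le_mul_of_pos_left m hk0) ha)
  -- the hook-divisible cells as a finset
  have hH : {p ∈ P.cells | (k : ℤ) ∣ P.hook p}.ncard = (HFin P k N).card := by
    rw [cells_filter_ncard P hz (fun p => (k:ℤ) ∣ P.hook p)]
    unfold HFin
    congr 1
  have e1 := card_HFin_eq_pairs P hz hk0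
  have e2 := card_pairsFin P (k := k) (N := N)
  have hBr := card_BB_residue P hz hk0 hNdef hreg
  have hNr : ∀ r, r < k → ((Finset.range N).filter (fun x => x % k = r)).card = m := by
    intro r hr
    rw [hNdef]
    exact card_range_residue hk0 m r hr
  have hpairs := sum_pairs_residue hk0 (s := BB P N) (t := Finset.range N)
    (fun r hr => by rw [hBr r hr, hNr r hr])
  -- split the count below x ∈ BB into gaps and beads
  have hsplit : ∀ x ∈ BB P N,
      x / k = ((Finset.range x).filter (fun y => y % k = x % k ∧ y ∉ BB P N)).card
        + ((BB P N).filter (fun y => y % k = x % k ∧ y < x)).card := by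
    intro x _
    have h0 := Finset.card_filter_add_card_filter_not
      (s := (Finset.range x).filter (fun y => y % k = x % k)) (fun y => y ∈ BB P N)
    rw [Finset.filter_filter, Finset.filter_filter, modcount hk0 x] at h0
    have hb : (Finset.range x).filter (fun y => y % k = x % k ∧ y ∈ BB P N)
        = (BB P N).filter (fun y => y % k = x % k ∧ y < x) := by
      ext y
      simp only [Finset.mem_filter, Finset.mem_range]
      tauto
    rw [hb] at h0
    have hcomm : (Finset.range x).filter (fun y => y % k = x % k ∧ ¬ y ∈ BB P N)
        = (Finset.range x).filter (fun y => y % k = x % k ∧ y ∉ BB P N) := rfl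
    omega
  have hsum1 : ∑ x ∈ BB P N, x / k
      = (pairsFin P k N).card
        + ∑ x ∈ BB P N, ((BB P N).filter (fun y => y % k = x % k ∧ y < x)).card := by
    rw [e2, ← Finset.sum_add_distrib]
    exact Finset.sum_congr rfl hsplit
  -- all of range N: no gaps below
  have hsum2 : ∑ x ∈ Finset.range N, x / k
      = ∑ x ∈ Finset.range N,
          ((Finset.range N).filter (fun y => y % k = x % k ∧ y < x)).card := by
    apply Finset.sum_congr rfl
    intro x hx
    have hxN : x < N := Finset.mem_range.mp hx
    rw [← modcount hk0 x]
    congr 1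
    ext y
    simp only [Finset.mem_filter, Finset.mem_range]
    constructor
    · rintro ⟨h1, h2⟩; exact ⟨by omega, h2, h1⟩
    · rintro ⟨_, h2, h3⟩; exact ⟨h3, h2⟩
  -- color count identity for c = 0
  have hid0 := colorCount_identity P hz hk0 ⟨m, hNdef⟩ (c := 0) hk0
  have hphiz : ∀ s : Finset ℕ, ∑ x ∈ s, phi k 0 x = ∑ x ∈ s, x / k := fun s =>
    Finset.sum_congr rfl (fun x _ => phi_id hk0 x)
  rw [hphiz, hphiz] at hid0
  -- conclude HFin card = colorCount 0
  have hcc0 : (HFin P k N).card = P.colorCount k ((0:ℕ) : ℤ) := by omega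
  -- total count over colors
  have htot : ∑ c ∈ Finset.range k, P.colorCount k (c : ℤ) = k * n := by
    rw [sum_colorCount P hz hk0, card_cellsFin, ← size_eq_sum P hz, hsize]
  have hconst : ∀ c ∈ Finset.range k, P.colorCount k (c : ℤ)
      = P.colorCount k ((0:ℕ) : ℤ) :=
    fun c hc => hreg c hc 0 (Finset.mem_range.mpr hk0)
  rw [Finset.sum_congr rfl hconst, Finset.sum_const, Finset.card_range, smul_eq_mul] at htot
  have : P.colorCount k ((0:ℕ) : ℤ) = n := Nat.eq_of_mul_eq_mul_left hk0 htot
  rw [hH, hcc0, this]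
end
end
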